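/- arXiv:2004.11998 — 6 statements merged into one kernel-verified Lean document; each statement's English description precedes it below -/
import Mathlib

section
/- Let n ≥ 1, let A be a finite linearly ordered alphabet, and let X ⊆ A^n be stable under the symmetric group S_n acting on positions, i.e., if (w_1,…,w_n) ∈ X then (w_{σ(1)},…,w_{σ(n)}) ∈ X for every permutation σ of {1,…,n}. Then the triple (X, X^maj(t), C) exhibits the cyclic sieving phenomenon, where C is the cyclic group of order n acting on X by cyclic shifts. -/
/-- The (leftward) cyclic shift on words of length `n`:
`c(w₁,…,wₙ) = (w₂,…,wₙ,w₁)`. -/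
def cshift {A : Type*} {n : ℕ} (w : Fin n → A) : Fin n → A :=
  fun i => w ⟨((i : ℕ) + 1) % n, Nat.mod_lt _ i.pos⟩

/-- The major index of a word: `maj w = Σ_{1 ≤ i ≤ n-1, w_i > w_{i+1}} i`
(here positions are 0-indexed, so position `i : Fin n` is the `(i+1)`-st letter). -/
def majIdx {A : Type*} [LinearOrder A] {n : ℕ} (w : Fin n → A) : ℕ :=
  ∑ i : Fin n,
    if h : (i : ℕ) + 1 < n then (if w ⟨(i : ℕ) + 1, h⟩ < w i then (i : ℕ) + 1 else 0) else 0

/-- The number of cyclic descents of a word, `cdes w = #{i : w_i > w_{i+1}}`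
with indices read cyclically (`w_{n+1} := w_1`). -/
def cdes {A : Type*} [LinearOrder A] {n : ℕ} (w : Fin n → A) : ℕ :=
  (Finset.univ.filter fun i : Fin n =>
    w ⟨((i : ℕ) + 1) % n, Nat.mod_lt _ i.pos⟩ < w i).card

/-- The inversion number of a word: `inv w = #{(i,j) : i < j, w_i > w_j}`. -/
def invNum {A : Type*} [LinearOrder A] {n : ℕ} (w : Fin n → A) : ℕ :=
  (Finset.univ.filter fun p : Fin n × Fin n => p.1 < p.2 ∧ w p.2 < w p.1).card

/-- The Hamming weight of a binary word: the number of ones. -/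
def wt {n : ℕ} (w : Fin n → Bool) : ℕ :=
  (Finset.univ.filter fun i => w i = true).card

/-- The triple `(X, Σ_{x ∈ X} t^{stat x}, C)` exhibits the cyclic sieving phenomenon,
where `C` is the cyclic group of order `n` generated by the cyclic shift `c` acting on `X`:
for every `d`, the number of fixed points of `c^d` on `X` equals the evaluation of
`Σ_{x ∈ X} t^{stat x}` at `t = ζ^d`, with `ζ = exp(2πi/n)`. -/
def exhibitsCSP {A : Type*} [DecidableEq A] {n : ℕ} (X : Finset (Fin n → A))
    (stat : (Fin n → A) → ℕ) : Prop :=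
  ∀ d : ℕ,
    ((X.filter fun v => cshift^[d] v = v).card : ℂ) =
      ∑ v ∈ X, Complex.exp (2 * (Real.pi : ℂ) * Complex.I / n) ^ (d * stat v)

/-!
A set of words stable under permuting positions is a union of content classes, so it suffices
to prove the sieving identity for sums weighted by an arbitrary function of the content.
Put `g = gcd(n, d)` and `ℓ = n / g`, so that `ω = ζ^d` is a primitive `ℓ`-th root of unity.
The words fixed by `c^d` are the words of period `g`, i.e. `g`-letter words repeated `ℓ` times.
Cutting a word into `g` blocks of length `ℓ`, `ω^maj` factors over the blocks, because the
descents at block boundaries sit at multiples of `ℓ`. Within a content class of `ℓ`-letter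
words, `Σ ω^maj` counts the constant words: rotating a word lowers `maj` by `cdes` modulo `ℓ`,
and `0 < cdes < ℓ` for a nonconstant word, so its rotation orbit contributes zero. Both sides
therefore count the words all of whose blocks are constant.
-/

namespace CyclicSieving

open Finset Function Fin.NatCast

variable {A : Type*} {n : ℕ}

def content (w : Fin n → A) : Multiset A := univ.val.map w

lemma content_eq_sum (w : Fin n → A) : content w = ∑ i, {w i} := by
  rw [content, Finset.sum_eq_multiset_sum, ← Multiset.sum_map_singleton (univ.val.map w),
    Multiset.map_map]
  rfl

lemma content_comp_perm (w : Fin n → A) (σ : Equiv.Perm (Fin n)) :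
    content (w ∘ σ) = content w := by
  rw [content, ← Multiset.map_map, Multiset.map_univ_val_equiv, content]

lemma exists_perm_of_content_eq [LinearOrder A] {v w : Fin n → A} (h : content v = content w) :
    ∃ σ : Equiv.Perm (Fin n), v = w ∘ σ := by
  have hsort : v ∘ Tuple.sort v = w ∘ Tuple.sort w := by
    refine List.ofFn_injective (List.Perm.eq_of_sortedLE (Tuple.monotone_sort v).sortedLE_ofFn
      (Tuple.monotone_sort w).sortedLE_ofFn ?_)
    rw [← Multiset.coe_eq_coe, ← Fin.univ_val_map, ← Fin.univ_val_map]
    exact (content_comp_perm v _).trans (h.trans (content_comp_perm w _).symm)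
  refine ⟨(Tuple.sort v).symm.trans (Tuple.sort w), funext fun i => ?_⟩
  simpa using congrFun hsort ((Tuple.sort v).symm i)

def IsConst (w : Fin n → A) : Prop := ∀ i j, w i = w j

instance [DecidableEq A] (w : Fin n → A) : Decidable (IsConst w) :=
  inferInstanceAs (Decidable (∀ i j, w i = w j))

lemma IsConst.rotate {w : Fin n → A} (hw : IsConst w) (k : Fin n) : (fun i => w (i + k)) = w :=
  funext fun _ => hw _ _

section Rotation

variable [NeZero n]

lemma mk_add_one_mod (i : Fin n) : (⟨((i : ℕ) + 1) % n, Nat.mod_lt _ i.pos⟩ : Fin n) = i + 1 :=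
  Fin.ext (by simp [Fin.val_add])

lemma cshift_eq (w : Fin n → A) : cshift w = fun i => w (i + 1) :=
  funext fun i => congrArg w (mk_add_one_mod i)

lemma cshift_iterate (w : Fin n → A) (k : ℕ) : cshift^[k] w = fun i => w (i + (k : Fin n)) := by
  induction k with
  | zero => simp
  | succ k ih =>
    rw [iterate_succ_apply', ih, cshift_eq]
    simp only [Nat.cast_succ, add_right_comm, add_assoc]

lemma isPeriodicPt_cshift_self (w : Fin n → A) : IsPeriodicPt cshift n w := by
  simp [IsPeriodicPt, IsFixedPt, cshift_iterate]

lemma val_add_one_eq_mod (i : Fin n) : ((i + 1 : Fin n) : ℕ) = ((i : ℕ) + 1) % n := by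
  rw [← mk_add_one_mod]

lemma mk_add_one_of_lt {i : Fin n} (h : (i : ℕ) + 1 < n) : (⟨(i : ℕ) + 1, h⟩ : Fin n) = i + 1 :=
  Fin.ext (by rw [val_add_one_eq_mod, Nat.mod_eq_of_lt h])

end Rotation

section Descents

variable [LinearOrder A]

def majTerm (w : Fin n → A) (i : Fin n) : ℕ :=
  if h : (i : ℕ) + 1 < n then (if w ⟨(i : ℕ) + 1, h⟩ < w i then (i : ℕ) + 1 else 0) else 0

lemma majIdx_eq_sum_majTerm (w : Fin n → A) : majIdx w = ∑ i, majTerm w i := rfl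

lemma IsConst.majIdx_eq_zero {w : Fin n → A} (hw : IsConst w) : majIdx w = 0 :=
  sum_eq_zero fun i _ => by simp [hw _ i]

variable [NeZero n]

lemma cdes_eq_card (w : Fin n → A) : cdes w = #{i | w (i + 1) < w i} := by
  simp only [cdes, mk_add_one_mod]

lemma majIdx_cshift (w : Fin n → A) :
    majIdx (cshift w) = ∑ i, if w (i + 1) < w i then (i : ℕ) else 0 := by
  refine Fintype.sum_equiv (Equiv.addRight 1) _ _ fun i => ?_
  simp only [Equiv.coe_addRight, cshift_eq, val_add_one_eq_mod]
  by_cases h : (i : ℕ) + 1 < n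
  · simp [h, mk_add_one_of_lt h, Nat.mod_eq_of_lt h]
  · have hi : (i : ℕ) + 1 = n := by omega
    simp [hi]

lemma pow_majTerm {M : Type*} [Monoid M] {ω : M} (hω : ω ^ n = 1) (w : Fin n → A) (i : Fin n) :
    ω ^ majTerm w i = ω ^ (if w (i + 1) < w i then (i : ℕ) + 1 else 0) := by
  by_cases h : (i : ℕ) + 1 < n
  · simp [majTerm, h, mk_add_one_of_lt h]
  · have hi : (i : ℕ) + 1 = n := by omega
    simp only [majTerm, h, dite_false]
    split_ifs <;> simp [hi, hω]

lemma pow_majIdx_cshift_mul_pow_cdes {M : Type*} [CommMonoid M] {ω : M} (hω : ω ^ n = 1)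
    (w : Fin n → A) : ω ^ majIdx (cshift w) * ω ^ cdes w = ω ^ majIdx w := by
  rw [majIdx_cshift, cdes_eq_card, card_filter, majIdx_eq_sum_majTerm, ← pow_add,
    ← sum_add_distrib, ← prod_pow_eq_pow_sum, ← prod_pow_eq_pow_sum]
  refine prod_congr rfl fun i _ => ?_
  rw [pow_majTerm hω]
  split_ifs <;> rfl

lemma cdes_rotate (w : Fin n → A) (k : Fin n) : cdes (fun i => w (i + k)) = cdes w := by
  rw [cdes_eq_card, cdes_eq_card]
  exact card_equiv (Equiv.addRight k) fun i => by simp [add_right_comm]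

lemma cdes_lt (w : Fin n → A) : cdes w < n := by
  obtain ⟨m, -, hm⟩ := exists_min_image univ w univ_nonempty
  rw [cdes_eq_card]
  refine (card_lt_univ_of_notMem (x := m) ?_).trans_eq (Fintype.card_fin n)
  simpa using hm _ (mem_univ _)

lemma isConst_of_cdes_eq_zero {w : Fin n → A} (h : cdes w = 0) : IsConst w := by
  have hstep : ∀ i, w i ≤ w (i + 1) := fun i => not_lt.1 fun hi => by
    rw [cdes_eq_card, card_eq_zero, filter_eq_empty_iff] at h
    exact h (mem_univ i) hi
  have hmono : ∀ i (k : ℕ), w i ≤ w (i + k) := by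
    intro i k
    induction k with
    | zero => simp
    | succ k ih => simpa [add_assoc] using ih.trans (hstep (i + k))
  have hle : ∀ i j, w i ≤ w j := fun i j => by simpa using hmono i (j - i : Fin n)
  exact fun i j => le_antisymm (hle i j) (hle j i)

end Descents

section OrbitSum

variable [LinearOrder A] [NeZero n] {R : Type*} [CommRing R] [IsDomain R] {ω : R}

lemma sum_pow_majIdx_rotate (hω : IsPrimitiveRoot ω n) (w : Fin n → A) :
    ∑ k : Fin n, ω ^ majIdx (fun i => w (i + k)) = if IsConst w then (n : R) else 0 := by
  split_ifs with hw
  · simp [hw.rotate, hw.majIdx_eq_zero]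
  set t : Fin n → R := fun k => ω ^ majIdx (fun i => w (i + k))
  have hy : ω ^ cdes w ≠ 1 :=
    hω.pow_ne_one_of_pos_of_lt (mt isConst_of_cdes_eq_zero hw) (cdes_lt w)
  have hstep : ∀ k, t (k + 1) * ω ^ cdes w = t k := fun k => by
    simpa [t, cshift_eq, cdes_rotate, add_assoc, add_comm (1 : Fin n)] using
      pow_majIdx_cshift_mul_pow_cdes hω.pow_eq_one (fun i => w (i + k))
  have hfix : (∑ k, t k) * ω ^ cdes w = ∑ k, t k := by
    rw [sum_mul]
    exact Fintype.sum_equiv (Equiv.subRight 1) _ _ fun k => by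
      rw [Equiv.subRight_apply, ← hstep (k - 1), sub_add_cancel]
  by_contra hS
  exact hy ((mul_eq_left₀ hS).1 hfix)

lemma sum_pow_majIdx_eq_card_isConst (hω : IsPrimitiveRoot ω n) (S : Finset (Fin n → A))
    (hS : ∀ k, ∀ w ∈ S, (fun i => w (i + k)) ∈ S) :
    ∑ w ∈ S, ω ^ majIdx w = #{w ∈ S | IsConst w} := by
  have := hω.neZero'
  have hrot : ∀ k : Fin n, ∑ w ∈ S, ω ^ majIdx (fun i => w (i + k)) = ∑ w ∈ S, ω ^ majIdx w :=
    fun k => sum_nbij' (fun w i => w (i + k)) (fun w i => w (i + -k)) (hS k) (hS (-k))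
      (fun w _ => by simp) (fun w _ => by simp) fun _ _ => rfl
  refine mul_left_cancel₀ (NeZero.ne (n : R)) ?_
  calc (n : R) * ∑ w ∈ S, ω ^ majIdx w
      = ∑ w ∈ S, ∑ k : Fin n, ω ^ majIdx (fun i => w (i + k)) := by
        rw [sum_comm, sum_congr rfl fun k _ => hrot k]
        simp
    _ = n * #{w ∈ S | IsConst w} := by
        simp_rw [sum_pow_majIdx_rotate hω, sum_ite, sum_const_zero, add_zero, sum_const,
          nsmul_eq_mul, mul_comm]

end OrbitSum

section Blocks

variable {k m : ℕ}

def blockIndex (h : k * m = n) : Fin k × Fin m ≃ Fin n := finProdFinEquiv.trans (finCongr h)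

lemma blockIndex_val (h : k * m = n) (b : Fin k) (r : Fin m) :
    (blockIndex h (b, r) : ℕ) = r + m * b := by
  simp [blockIndex]

def toBlocks (h : k * m = n) : (Fin n → A) ≃ (Fin k → Fin m → A) :=
  ((blockIndex h).arrowCongr (Equiv.refl A)).symm.trans (Equiv.curry _ _ _)

@[simp]
lemma toBlocks_apply (h : k * m = n) (w : Fin n → A) (b : Fin k) (r : Fin m) :
    toBlocks h w b r = w (blockIndex h (b, r)) := rfl

lemma content_eq_sum_toBlocks (h : k * m = n) (w : Fin n → A) :
    content w = ∑ b, content (toBlocks h w b) := by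
  simp only [content_eq_sum, toBlocks_apply]
  rw [← Equiv.sum_comp (blockIndex h), Fintype.sum_prod_type]

lemma majTerm_blockIndex_modEq [LinearOrder A] (h : k * m = n) (w : Fin n → A) (b : Fin k)
    (r : Fin m) : majTerm w (blockIndex h (b, r)) ≡ majTerm (toBlocks h w b) r [MOD m] := by
  have hb : (b : ℕ) + 1 ≤ k := b.isLt
  have hval := blockIndex_val h b r
  by_cases hr : (r : ℕ) + 1 < m
  · have hlt : (blockIndex h (b, r) : ℕ) + 1 < n := by
      rw [hval, ← h]; nlinarith
    have hnext : (⟨(blockIndex h (b, r) : ℕ) + 1, hlt⟩ : Fin n) = blockIndex h (b, ⟨r + 1, hr⟩) :=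
      Fin.ext (by simp only [blockIndex_val]; ring)
    simp only [majTerm, dif_pos hlt, dif_pos hr, hnext, toBlocks_apply]
    by_cases hd : w (blockIndex h (b, ⟨r + 1, hr⟩)) < w (blockIndex h (b, r))
    · simp only [hd, if_true, Nat.ModEq, hval]
      rw [add_right_comm, Nat.add_mul_mod_self_left]
    · simp only [hd, if_false, Nat.ModEq.refl]
  · have hend : (blockIndex h (b, r) : ℕ) + 1 = m * (b + 1) := by
      have := r.isLt
      rw [hval, mul_add]
      omega
    simp only [majTerm, dif_neg hr, Nat.ModEq, Nat.zero_mod]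
    split_ifs <;> simp [hend]

lemma pow_majIdx_eq_prod_toBlocks [LinearOrder A] {M : Type*} [CommMonoid M] {ω : M}
    (hω : ω ^ m = 1) (h : k * m = n) (w : Fin n → A) :
    ω ^ majIdx w = ∏ b, ω ^ majIdx (toBlocks h w b) := by
  simp only [majIdx_eq_sum_majTerm, ← prod_pow_eq_pow_sum]
  rw [← Equiv.prod_comp (blockIndex h), Fintype.prod_prod_type]
  exact prod_congr rfl fun b _ => prod_congr rfl fun r _ =>
    pow_eq_pow_of_modEq (majTerm_blockIndex_modEq h w b r) hω

end Blocks

section FiberSums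

variable {ι W M R : Type*} [Fintype ι] [DecidableEq ι] [Fintype W] [DecidableEq M]
  [CommSemiring R]

lemma sum_mul_prod_eq_sum_piFinset (c : W → M) (Φ : (ι → M) → R) (f : W → R) :
    ∑ U : ι → W, Φ (c ∘ U) * ∏ b, f (U b) =
      ∑ μ ∈ Fintype.piFinset fun _ => univ.image c, Φ μ * ∏ b, ∑ u with c u = μ b, f u := by
  simp_rw [prod_univ_sum, mul_sum]
  rw [← sum_fiberwise_of_maps_to (g := (c ∘ ·)) (t := Fintype.piFinset fun _ => univ.image c)
    (fun U _ => by simp)]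
  refine sum_congr rfl fun μ _ => ?_
  have hfiber : ({U | c ∘ U = μ} : Finset (ι → W)) = Fintype.piFinset fun b => {u | c u = μ b} := by
    ext U
    simp [funext_iff]
  rw [hfiber]
  refine sum_congr rfl fun U hU => ?_
  rw [show c ∘ U = μ from funext fun b => by simpa using Fintype.mem_piFinset.1 hU b]

lemma sum_mul_prod_congr_of_sum_fiber_eq (c : W → M) (Φ : (ι → M) → R) {f f' : W → R}
    (hf : ∀ μ, ∑ u with c u = μ, f u = ∑ u with c u = μ, f' u) :
    ∑ U : ι → W, Φ (c ∘ U) * ∏ b, f (U b) = ∑ U : ι → W, Φ (c ∘ U) * ∏ b, f' (U b) := by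
  simp only [sum_mul_prod_eq_sum_piFinset, hf]

end FiberSums

lemma content_const (m : ℕ) (x : A) : content (fun _ : Fin m => x) = m • {x} := by
  simp [content_eq_sum]

lemma sum_mul_prod_isConst {R : Type*} [CommSemiring R] [Fintype A] [DecidableEq A] {k m : ℕ}
    [NeZero m] (F : (Fin k → Fin m → A) → R) :
    ∑ U, F U * ∏ b, (if IsConst (U b) then 1 else 0) = ∑ a : Fin k → A, F fun b _ => a b := by
  trans ∑ U with ∀ b, IsConst (U b), F U
  · rw [Finset.sum_filter]
    exact sum_congr rfl fun U _ => by rw [Fintype.prod_boole, mul_boole]; congr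
  refine (sum_nbij' (fun (a : Fin k → A) b (_ : Fin m) => a b) (fun U b => U b 0)
    (fun _ _ => mem_filter.2 ⟨mem_univ _, fun _ _ _ => rfl⟩) (fun _ _ => mem_univ _)
    (fun _ _ => rfl) (fun U hU => ?_) fun _ _ => rfl).symm
  funext b r
  exact (mem_filter.1 hU).2 b 0 r

section Periodic

variable {g : ℕ} [NeZero g]

def periodicExt (a : Fin g → A) : Fin n → A := fun i => a (i : ℕ)

lemma toBlocks_periodicExt {m : ℕ} (h : m * g = n) (a : Fin g → A) (t : Fin m) :
    toBlocks h (periodicExt a) t = a := by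
  funext r
  change a (blockIndex h (t, r) : ℕ) = a r
  rw [blockIndex_val]
  exact congrArg a (Fin.ext (by rw [Fin.val_natCast, Nat.add_mul_mod_self_left,
    Nat.mod_eq_of_lt r.isLt]))

lemma content_periodicExt {m : ℕ} (h : m * g = n) (a : Fin g → A) :
    content (periodicExt (n := n) a) = m • content a := by
  simp [content_eq_sum_toBlocks h, toBlocks_periodicExt]

variable [NeZero n]

lemma isPeriodicPt_periodicExt (hg : g ∣ n) (a : Fin g → A) :
    IsPeriodicPt cshift g (periodicExt (n := n) a) := by
  simp only [IsPeriodicPt, IsFixedPt, cshift_iterate]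
  funext i
  simp only [periodicExt]
  congr 1
  ext
  simp [Fin.val_add, Nat.mod_mod_of_dvd _ hg]

lemma periodicExt_restrict {w : Fin n → A} (hw : IsPeriodicPt cshift g w) :
    periodicExt (fun r : Fin g => w (r : ℕ)) = w := by
  funext i
  have hshift := congrFun ((cshift_iterate w _).symm.trans (hw.mul_const (i / g)))
    ((i % g : ℕ) : Fin n)
  simp only [periodicExt, Fin.val_natCast]
  rw [← hshift, ← Nat.cast_add, Nat.mod_add_div, Fin.cast_val_eq_self]

lemma restrict_periodicExt (hg : g ∣ n) (a : Fin g → A) :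
    (fun r : Fin g => periodicExt (n := n) a (r : ℕ)) = a := by
  funext r
  simp [periodicExt, Nat.mod_eq_of_lt (r.isLt.trans_le (Nat.le_of_dvd (NeZero.pos n) hg))]

lemma sum_isPeriodicPt_cshift {M : Type*} [AddCommMonoid M] [Fintype A] [DecidableEq A]
    (hg : g ∣ n) (F : (Fin n → A) → M) :
    ∑ w with IsPeriodicPt cshift g w, F w = ∑ a : Fin g → A, F (periodicExt a) :=
  (sum_nbij' periodicExt (fun w r => w (r : ℕ)) (fun a _ => mem_filter.2 ⟨mem_univ _,
    isPeriodicPt_periodicExt hg a⟩) (fun _ _ => mem_univ _) (fun a _ => restrict_periodicExt hg a)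
    (fun _ hw => periodicExt_restrict (mem_filter.1 hw).2) fun _ _ => rfl).symm

lemma isPeriodicPt_cshift_iff_gcd (d : ℕ) (w : Fin n → A) :
    IsPeriodicPt cshift d w ↔ IsPeriodicPt cshift (n.gcd d) w :=
  ⟨(isPeriodicPt_cshift_self w).gcd, fun h => h.trans_dvd (Nat.gcd_dvd_right n d)⟩

end Periodic

lemma eq_filter_content_mem_image [LinearOrder A] [Fintype A] {X : Finset (Fin n → A)}
    (hX : ∀ σ : Equiv.Perm (Fin n), ∀ w ∈ X, w ∘ σ ∈ X) :
    X = univ.filter fun w => content w ∈ X.image content := by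
  ext w
  simp only [mem_filter, mem_univ, true_and, mem_image]
  refine ⟨fun hw => ⟨w, hw, rfl⟩, ?_⟩
  rintro ⟨v, hv, hvw⟩
  obtain ⟨σ, rfl⟩ := exists_perm_of_content_eq hvw.symm
  exact hX σ v hv

theorem sum_fixedPoints_eq_sum_pow_majIdx [LinearOrder A] [Fintype A] [NeZero n] {R : Type*}
    [CommRing R] [IsDomain R] {ζ : R} (hζ : IsPrimitiveRoot ζ n) (φ : Multiset A → R) (d : ℕ) :
    ∑ w : Fin n → A with cshift^[d] w = w, φ (content w) =
      ∑ w : Fin n → A, φ (content w) * ζ ^ (d * majIdx w) := by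
  set g := n.gcd d
  set ℓ := n / g
  have hgℓ : g * ℓ = n := Nat.mul_div_cancel' (Nat.gcd_dvd_left n d)
  have : NeZero g := ⟨(Nat.gcd_pos_of_pos_left d (NeZero.pos n)).ne'⟩
  have : NeZero ℓ := ⟨fun h => NeZero.ne n (by rw [← hgℓ, h, mul_zero])⟩
  have hω : IsPrimitiveRoot (ζ ^ d) ℓ := by
    have := IsPrimitiveRoot.orderOf (ζ ^ d)
    rwa [(hζ.isOfFinOrder (NeZero.ne n)).orderOf_pow, ← hζ.eq_orderOf] at this
  have hfiber : ∀ μ, ∑ u : Fin ℓ → A with content u = μ, (if IsConst u then 1 else 0) =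
      ∑ u : Fin ℓ → A with content u = μ, (ζ ^ d) ^ majIdx u := fun μ => by
    rw [sum_boole, sum_pow_majIdx_eq_card_isConst hω, filter_filter]
    intro k u hu
    rw [mem_filter] at hu ⊢
    exact ⟨mem_univ _, (content_comp_perm u (Equiv.addRight k)).trans hu.2⟩
  calc ∑ w : Fin n → A with cshift^[d] w = w, φ (content w)
      = ∑ a : Fin g → A, φ (ℓ • content a) := by
        rw [filter_congr (p := fun w => cshift^[d] w = w)
          fun w _ => isPeriodicPt_cshift_iff_gcd d w, sum_isPeriodicPt_cshift (Nat.gcd_dvd_left n d)]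
        simp_rw [content_periodicExt (mul_comm ℓ g ▸ hgℓ)]
        rfl
    _ = ∑ U : Fin g → Fin ℓ → A, φ (∑ b, content (U b)) * ∏ b, if IsConst (U b) then 1 else 0 := by
        rw [sum_mul_prod_isConst]
        simp_rw [content_const, ← smul_sum, ← content_eq_sum]
    _ = ∑ U : Fin g → Fin ℓ → A, φ (∑ b, content (U b)) * ∏ b, (ζ ^ d) ^ majIdx (U b) :=
        sum_mul_prod_congr_of_sum_fiber_eq content (fun μ => φ (∑ b, μ b)) hfiber
    _ = ∑ w : Fin n → A, φ (content w) * ζ ^ (d * majIdx w) := by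
        refine Fintype.sum_equiv (toBlocks hgℓ).symm _ _ fun U => ?_
        rw [pow_mul, pow_majIdx_eq_prod_toBlocks hω.pow_eq_one hgℓ, content_eq_sum_toBlocks hgℓ,
          Equiv.apply_symm_apply]

end CyclicSieving

/-- If X ⊆ A^n (with A a finite linearly ordered alphabet, n ≥ 1)
is stable under the symmetric group acting on positions, then (X, X^maj(t), C)
exhibits the cyclic sieving phenomenon. -/
theorem stmt0 {A : Type*} [Fintype A] [LinearOrder A] {n : ℕ} (hn : 1 ≤ n)
    (X : Finset (Fin n → A))
    (hX : ∀ σ : Equiv.Perm (Fin n), ∀ w ∈ X, (fun i => w (σ i)) ∈ X) :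
    exhibitsCSP X majIdx := by
  have : NeZero n := ⟨by omega⟩
  intro d
  have key := CyclicSieving.sum_fixedPoints_eq_sum_pow_majIdx
    (Complex.isPrimitiveRoot_exp n (NeZero.ne n))
    (fun μ => if μ ∈ X.image CyclicSieving.content then 1 else 0) d
  simp only [Finset.sum_boole, boole_mul] at key
  rw [CyclicSieving.eq_filter_content_mem_image hX, Finset.filter_comm, key, Finset.sum_filter]
end

section
/- Let n ≥ 1, let A be a finite linearly ordered alphabet, and let X ⊆ A^n be stable under the symmetric group S_n acting on positions, i.e., if (w_1,…,w_n) ∈ X then (w_{σ(1)},…,w_{σ(n)}) ∈ X for every permutation σ of {1,…,n}. Then the triple (X, X^inv(t), C) exhibits the cyclic sieving phenomenon, where C is the cyclic group of order n acting on X by cyclic shifts. -/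
open Finset

section Inversions

variable {A : Type*} [LinearOrder A]

lemma invNum_eq_sum {N : ℕ} (w : Fin N → A) :
    invNum w = ∑ i, ∑ j, if i < j ∧ w j < w i then 1 else 0 := by
  rw [invNum, card_filter, Fintype.sum_prod_type]

lemma invNum_const {N : ℕ} (a : A) : invNum (fun _ : Fin N => a) = 0 := by
  simp [invNum]

lemma invNum_cons {N : ℕ} (x : A) (t : Fin N → A) :
    invNum (Fin.cons x t : Fin (N + 1) → A) = invNum t + #{j | t j < x} := by
  rw [invNum_eq_sum, invNum_eq_sum, card_filter]
  simp [Fin.sum_univ_succ, add_comm, -sum_boole]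

lemma invNum_snoc {N : ℕ} (t : Fin N → A) (x : A) :
    invNum (Fin.snoc t x : Fin (N + 1) → A) = invNum t + #{i | x < t i} := by
  rw [invNum_eq_sum, invNum_eq_sum, card_filter]
  simp [Fin.sum_univ_castSucc, (Fin.castSucc_lt_last _).not_gt, sum_add_distrib, -sum_boole]

lemma invNum_append {N M : ℕ} (p : Fin N → A) (s : Fin M → A) :
    invNum (Fin.append p s) = invNum p + invNum s + #{x : Fin N × Fin M | s x.2 < p x.1} := by
  rw [invNum_eq_sum, invNum_eq_sum, invNum_eq_sum, card_filter, Fintype.sum_prod_type]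
  have hlt (i : Fin N) (j : Fin M) : Fin.castAdd M i < Fin.natAdd N j := by
    rw [Fin.lt_def]
    simp only [Fin.val_castAdd, Fin.val_natAdd]
    omega
  have hcc (i j : Fin N) : Fin.castAdd M i < Fin.castAdd M j ↔ i < j := Iff.rfl
  simp [Fin.sum_univ_add, hlt, (hlt _ _).not_gt, hcc, sum_add_distrib, -sum_boole]
  ring

lemma invNum_comp_orderEmbedding {N M : ℕ} (w : Fin N → A) (s : Finset (Fin N))
    (e : Fin M ↪o Fin N) (he : ∀ i, i ∈ s ↔ i ∈ Set.range e) :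
    invNum (w ∘ e) = #{p : Fin N × Fin N | (p.1 < p.2 ∧ w p.2 < w p.1) ∧ p.1 ∈ s ∧ p.2 ∈ s} := by
  refine card_nbij (Prod.map e e) (fun p hp => ?_) (fun p _ p' _ h => ?_) (fun p hp => ?_)
  · simp only [coe_filter, mem_univ, true_and, Set.mem_ofPred_eq, Prod.map_fst, Prod.map_snd,
      Function.comp_apply, e.lt_iff_lt] at hp ⊢
    exact ⟨hp, (he _).mpr ⟨_, rfl⟩, (he _).mpr ⟨_, rfl⟩⟩
  · exact Prod.ext (e.injective (congrArg Prod.fst h)) (e.injective (congrArg Prod.snd h))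
  · obtain ⟨p₁, p₂⟩ := p
    simp only [coe_filter, mem_univ, true_and, Set.mem_ofPred_eq] at hp
    obtain ⟨⟨hlt, hinv⟩, h₁, h₂⟩ := hp
    obtain ⟨i, rfl⟩ := (he _).mp h₁
    obtain ⟨j, rfl⟩ := (he _).mp h₂
    exact ⟨(i, j), by simpa [e.lt_iff_lt] using And.intro hlt hinv, rfl⟩

/-- Inversions starting at a largest letter `a` are those of its indicator word; all others lie in
the subword on the remaining positions `e`. -/
lemma invNum_eq_invNum_decide_add {N M : ℕ} (w : Fin N → A) (a : A) (hw : ∀ i, w i ≤ a)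
    (e : Fin M ↪o Fin N) (he : ∀ i, w i ≠ a ↔ i ∈ Set.range e) :
    invNum w = invNum (fun i => decide (w i = a)) + invNum (w ∘ e) := by
  rw [invNum_comp_orderEmbedding w {i | w i ≠ a} e (by simpa using he), invNum,
    ← card_filter_add_card_filter_not (fun p => w p.1 = a), filter_filter, filter_filter, invNum]
  congr 2 <;> ext p
  · simp only [mem_filter, mem_univ, true_and, Bool.lt_iff, decide_eq_false_iff_not,
      decide_eq_true_eq]
    have := hw p.2
    grind
  · simp only [mem_filter, mem_univ, true_and]
    have := hw p.1
    grind

end Inversions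

section CyclicShift

variable {α : Type*}

lemma cshift_cons {N : ℕ} (x : α) (t : Fin N → α) :
    cshift (Fin.cons x t : Fin (N + 1) → α) = Fin.snoc t x := by
  funext i
  refine Fin.lastCases ?_ (fun j => ?_) i
  · simp [cshift]
  · have : ((j : ℕ) + 1) % (N + 1) = j + 1 := Nat.mod_eq_of_lt (by omega)
    simp only [cshift, Fin.val_castSucc, this, Fin.snoc_castSucc]
    exact Fin.cons_succ (α := fun _ => α) x t j

lemma cshift_eq_comp_finRotate {n : ℕ} (w : Fin n → α) : cshift w = w ∘ finRotate n := by
  funext i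
  rcases n with _ | n
  · exact i.elim0
  · simp only [cshift, Function.comp_apply, finRotate_apply]
    congr 1
    ext
    simp [Fin.val_add]

lemma cshift_bijective {n : ℕ} : Function.Bijective (cshift : (Fin n → α) → _) := by
  have : (cshift : (Fin n → α) → _) = Equiv.arrowCongr (finRotate n).symm (Equiv.refl α) := by
    funext w
    rw [cshift_eq_comp_finRotate]
    rfl
  rw [this]
  exact Equiv.bijective _

lemma cshift_iterate_apply {n : ℕ} (w : Fin n → α) (k : ℕ) (i : Fin n) :
    cshift^[k] w i = w ⟨((i : ℕ) + k) % n, Nat.mod_lt _ i.pos⟩ := by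
  induction k generalizing w with
  | zero => simp [Nat.mod_eq_of_lt i.isLt]
  | succ k ih =>
    rw [Function.iterate_succ_apply, ih]
    exact congrArg w (Fin.ext (by simp only [Nat.mod_add_mod, add_assoc]))

lemma isPeriodicPt_cshift_self {n : ℕ} (w : Fin n → α) : Function.IsPeriodicPt cshift n w :=
  funext fun i => by simp [cshift_iterate_apply, Nat.mod_eq_of_lt i.isLt]

end CyclicShift

section Content

variable {ι κ A : Type*}

lemma extend_apply_eq_iff_notMem_range {f : κ → ι} (hf : f.Injective) {v : κ → A} {a : A}
    (hv : ∀ j, v j ≠ a) (i : ι) : Function.extend f v (fun _ => a) i = a ↔ i ∉ Set.range f := by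
  refine ⟨?_, Function.extend_apply' _ _ _⟩
  rintro h ⟨j, rfl⟩
  exact hv j (by rwa [hf.extend_apply] at h)

lemma extend_comp_eq_of_notMem_range {f : κ → ι} (hf : f.Injective) {w : ι → A} {a : A}
    (hw : ∀ i, i ∉ Set.range f → w i = a) : Function.extend f (w ∘ f) (fun _ => a) = w := by
  funext i
  by_cases hi : i ∈ Set.range f
  · obtain ⟨j, rfl⟩ := hi
    exact hf.extend_apply _ _ j
  · rw [Function.extend_apply' _ _ _ hi, hw i hi]

variable [Fintype ι] [Fintype κ] [DecidableEq A]

def letterCount (w : ι → A) (a : A) : ℕ := #{i | w i = a}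

lemma letterCount_eq_zero_iff {w : ι → A} {a : A} : letterCount w a = 0 ↔ ∀ i, w i ≠ a := by
  simp [letterCount, filter_eq_empty_iff]

lemma sum_letterCount [Fintype A] (w : ι → A) : ∑ a, letterCount w a = Fintype.card ι := by
  rw [← card_univ, card_eq_sum_card_fiberwise (f := w) (t := univ) (by simp)]
  rfl

lemma letterCount_comp_equiv (w : ι → A) (e : κ ≃ ι) : letterCount (w ∘ e) = letterCount w := by
  funext a
  exact card_equiv e (by simp)

lemma exists_perm_of_letterCount_eq {w u : ι → A} (h : letterCount w = letterCount u) :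
    ∃ σ : Equiv.Perm ι, w = u ∘ σ := by
  have e (a : A) : {i // w i = a} ≃ {i // u i = a} :=
    Fintype.equivOfCardEq (by simpa [Fintype.card_subtype, letterCount] using congrFun h a)
  refine ⟨(Equiv.sigmaFiberEquiv w).symm.trans
    ((Equiv.sigmaCongrRight e).trans (Equiv.sigmaFiberEquiv u)), funext fun i => ?_⟩
  exact ((e (w i)) ⟨i, rfl⟩).2.symm

lemma letterCount_comp_of_range_eq {f : κ → ι} (hf : f.Injective) (w : ι → A) (a : A)
    (hw : ∀ i, w i ≠ a ↔ i ∈ Set.range f) :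
    letterCount (w ∘ f) = Function.update (letterCount w) a 0 := by
  funext c
  rcases eq_or_ne c a with rfl | hc
  · simp only [Function.update_self, letterCount, card_eq_zero, filter_eq_empty_iff]
    exact fun j _ h => (hw (f j)).mpr ⟨j, rfl⟩ h
  · rw [Function.update_of_ne hc]
    refine card_nbij f (fun j hj => by simpa using hj) (fun j _ j' _ h => hf h) (fun i hi => ?_)
    simp only [coe_filter, mem_univ, true_and, Set.mem_ofPred_eq] at hi
    obtain ⟨j, rfl⟩ := (hw i).mp (hi ▸ hc)
    exact ⟨j, by simpa using hi, rfl⟩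

end Content

section BinaryWords

variable {N : ℕ}

lemma wt_cshift (b : Fin N → Bool) : wt (cshift b) = wt b := by
  rw [cshift_eq_comp_finRotate]
  exact congrFun (letterCount_comp_equiv b _) true

lemma card_false_add_wt (b : Fin N → Bool) : #{i | b i = false} + wt b = N := by
  have h := sum_letterCount b
  rw [Fintype.sum_bool, Fintype.card_fin, add_comm] at h
  exact h

lemma wt_le (b : Fin N → Bool) : wt b ≤ N := by
  have := card_false_add_wt b
  omega

lemma wt_cons (x : Bool) (t : Fin N → Bool) :
    wt (Fin.cons x t : Fin (N + 1) → Bool) = wt t + if x then 1 else 0 := by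
  simp only [wt, card_filter, Fin.sum_univ_succ, Fin.cons_zero, Fin.cons_succ]
  cases x <;> simp [add_comm]

lemma wt_append {M : ℕ} (p : Fin N → Bool) (s : Fin M → Bool) :
    wt (Fin.append p s) = wt p + wt s := by
  simp only [wt, card_filter, Fin.sum_univ_add, Fin.append_left, Fin.append_right]

lemma invNum_cshift_add (b : Fin (N + 1) → Bool) :
    invNum (cshift b) + (if b 0 then N + 1 else 0) = invNum b + wt b := by
  rw [← Fin.cons_self_tail b, cshift_cons, invNum_cons, invNum_snoc, wt_cons, Fin.cons_zero]
  have := card_false_add_wt (Fin.tail b)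
  cases b 0
  · simp [wt, Bool.lt_iff]
  · simp only [wt, Bool.lt_iff, Bool.true_eq_false, false_and, filter_false, card_empty,
      add_zero, ↓reduceIte, and_true] at this ⊢
    omega

lemma invNum_append_bool {M : ℕ} (p : Fin N → Bool) (s : Fin M → Bool) :
    invNum (Fin.append p s) = invNum p + invNum s + wt p * (M - wt s) := by
  have hcross : #{x : Fin N × Fin M | s x.2 < p x.1} = wt p * #{j | s j = false} := by
    simp only [Bool.lt_iff, and_comm]
    rw [wt, ← card_product, ← filter_product, univ_product_univ]
  have := card_false_add_wt s
  rw [invNum_append, hcross]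
  congr 2
  omega

variable {R : Type*}

/-- The Gaussian binomial coefficient `[N choose K]_q`, as the inversion generating function of
binary words of length `N` with `K` ones. -/
def qBinom [CommSemiring R] (q : R) (N K : ℕ) : R := ∑ b : Fin N → Bool with wt b = K, q ^ invNum b

section CommSemiring

variable [CommSemiring R] (q : R)

lemma qBinom_eq_zero_of_lt {K : ℕ} (h : N < K) : qBinom q N K = 0 :=
  sum_eq_zero fun b hb => absurd ((mem_filter.mp hb).2 ▸ wt_le b) (by omega)

lemma qBinom_zero_right (N : ℕ) : qBinom q N 0 = 1 := by
  have : ({b : Fin N → Bool | wt b = 0} : Finset _) = {fun _ => false} := by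
    ext b
    simp [wt, funext_iff]
  simp [qBinom, this, invNum_const]

lemma qBinom_self (N : ℕ) : qBinom q N N = 1 := by
  have : ({b : Fin N → Bool | wt b = N} : Finset _) = {fun _ => true} := by
    ext b
    have := card_false_add_wt b
    simp only [mem_filter, mem_univ, true_and, mem_singleton, funext_iff]
    rw [show wt b = N ↔ #{i | b i = false} = 0 by omega, card_filter_eq_zero_iff]
    simp
  simp [qBinom, this, invNum_const]

/-- The `q`-Vandermonde identity, from cutting binary words of length `N + M` after position `N`. -/
lemma qBinom_add (N M K : ℕ) :
    qBinom q (N + M) K = ∑ x ∈ antidiagonal K,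
      q ^ (x.1 * (M - x.2)) * qBinom q N x.1 * qBinom q M x.2 := by
  let wts (x : (Fin N → Bool) × (Fin M → Bool)) : ℕ × ℕ := (wt x.1, wt x.2)
  have hsplit : qBinom q (N + M) K = ∑ x with wts x ∈ antidiagonal K,
      q ^ (invNum x.1 + invNum x.2 + wt x.1 * (M - wt x.2)) := by
    refine (sum_equiv (Fin.appendEquiv N M) (fun x => ?_) (fun x _ => ?_)).symm
    · simp only [mem_filter, mem_univ, true_and, HasAntidiagonal.mem_antidiagonal, wts]
      change _ ↔ wt (Fin.append x.1 x.2) = K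
      rw [wt_append]
    · change _ = q ^ invNum (Fin.append x.1 x.2)
      rw [invNum_append_bool]
  rw [hsplit, ← sum_fiberwise_of_maps_to (g := wts) (t := antidiagonal K)
    fun x hx => by simpa using hx]
  refine sum_congr rfl fun y hy => ?_
  have hfiber : ({x | wts x ∈ antidiagonal K ∧ wts x = y} : Finset _) =
      ({p | wt p = y.1} : Finset _) ×ˢ ({s | wt s = y.2} : Finset _) := by
    ext x
    have := HasAntidiagonal.mem_antidiagonal.mp hy
    simp only [mem_filter, mem_univ, true_and, mem_product, HasAntidiagonal.mem_antidiagonal,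
      wts, Prod.ext_iff]
    omega
  rw [filter_filter, hfiber, sum_product, qBinom, qBinom, mul_assoc, sum_mul_sum]
  simp only [mul_sum]
  refine sum_congr rfl fun p hp => sum_congr rfl fun s hs => ?_
  rw [(mem_filter.mp hp).2, (mem_filter.mp hs).2, pow_add, pow_add]
  ring

end CommSemiring

section IsDomain

variable [CommRing R] [IsDomain R] {q : R}

/-- Rotating a binary word with `K` ones multiplies `q ^ inv` by `q ^ K` when `q ^ N = 1`. -/
lemma qBinom_eq_zero_of_pow_eq_one {K : ℕ} (hN : q ^ N = 1) (hK : q ^ K ≠ 1) :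
    qBinom q N K = 0 := by
  rcases N with _ | N
  · exact qBinom_eq_zero_of_lt q (Nat.pos_of_ne_zero fun h => hK (h ▸ pow_zero q))
  have hrot (b : Fin (N + 1) → Bool) (hb : wt b = K) :
      q ^ invNum (cshift b) = q ^ K * q ^ invNum b := by
    have := congrArg (q ^ ·) (invNum_cshift_add b)
    rw [mul_comm]
    split_ifs at this <;> simpa [pow_add, hb, hN] using this
  have hinv : q ^ K * qBinom q (N + 1) K = qBinom q (N + 1) K := by
    unfold qBinom
    rw [mul_sum]
    refine sum_bijective cshift cshift_bijective (by simp [wt_cshift]) fun b hb => ?_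
    exact (hrot b (mem_filter.mp hb).2).symm
  have : (q ^ K - 1) * qBinom q (N + 1) K = 0 := by linear_combination hinv
  exact (mul_eq_zero.mp this).resolve_left (sub_ne_zero.mpr hK)

/-- In the `q`-Vandermonde identity with `M = L`, only the terms with `0` or `L` ones in the
second block survive. -/
lemma qBinom_add_of_isPrimitiveRoot {L : ℕ} (hq : IsPrimitiveRoot q L) (hL : 0 < L) (N K : ℕ) :
    qBinom q (N + L) K = qBinom q N K + if L ≤ K then qBinom q N (K - L) else 0 := by
  have hvanish (x : ℕ × ℕ) (hx : x ∈ antidiagonal K) (hK0 : x ≠ (K, 0)) (hKL : x ≠ (K - L, L)) :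
      q ^ (x.1 * (L - x.2)) * qBinom q N x.1 * qBinom q L x.2 = 0 := by
    have hsum := HasAntidiagonal.mem_antidiagonal.mp hx
    have h0 : x.2 ≠ 0 := fun h => hK0 (Prod.ext (by omega) h)
    rcases lt_or_gt_of_ne (fun h => hKL (Prod.ext (by omega) h) : x.2 ≠ L) with h | h
    · rw [qBinom_eq_zero_of_pow_eq_one hq.pow_eq_one (hq.pow_ne_one_of_pos_of_lt h0 h), mul_zero]
    · rw [qBinom_eq_zero_of_lt q h, mul_zero]
  have hK : q ^ (K * (L - 0)) * qBinom q N K * qBinom q L 0 = qBinom q N K := by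
    rw [Nat.sub_zero, pow_mul', hq.pow_eq_one, one_pow, one_mul, qBinom_zero_right, mul_one]
  rw [qBinom_add]
  split_ifs with hLK
  · rw [sum_eq_add_of_mem (K, 0) (K - L, L) (by simp)
      (by simp only [HasAntidiagonal.mem_antidiagonal]; omega)
      (by simp only [ne_eq, Prod.mk.injEq, not_and]; omega)
      fun x hx hne => hvanish x hx hne.1 hne.2, hK]
    simp [qBinom_self]
  · refine (sum_eq_single (K, 0) (fun x hx hne => hvanish x hx hne ?_) (by simp)).trans ?_
    · rintro rfl
      simp only [HasAntidiagonal.mem_antidiagonal] at hx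
      omega
    · rw [hK, add_zero]

lemma qBinom_mul_mul_of_isPrimitiveRoot {L : ℕ} (hq : IsPrimitiveRoot q L) (hL : 0 < L)
    (m c : ℕ) : qBinom q (L * m) (L * c) = m.choose c := by
  induction m generalizing c with
  | zero =>
    rcases c with _ | c
    · simp [qBinom_zero_right]
    · rw [mul_zero, qBinom_eq_zero_of_lt q (by positivity)]
      simp
  | succ m ih =>
    rw [mul_add_one, qBinom_add_of_isPrimitiveRoot hq hL]
    rcases c with _ | c
    · simp [qBinom_zero_right, hL.ne']
    · rw [if_pos (by nlinarith),
        show L * (c + 1) - L = L * c by rw [mul_add_one, Nat.add_sub_cancel], ih, ih, Nat.choose_succ_succ', Nat.cast_add, add_comm]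

lemma qBinom_mul_eq_zero_of_isPrimitiveRoot {L : ℕ} (hq : IsPrimitiveRoot q L) (hL : 0 < L)
    (m : ℕ) {K : ℕ} (hK : ¬ L ∣ K) : qBinom q (L * m) K = 0 := by
  induction m generalizing K with
  | zero =>
    rw [mul_zero]
    exact qBinom_eq_zero_of_lt q (Nat.pos_of_ne_zero (by rintro rfl; exact hK (dvd_zero L)))
  | succ m ih =>
    rw [mul_add_one, qBinom_add_of_isPrimitiveRoot hq hL, ih hK]
    split_ifs with hLK
    · rw [ih fun h => hK (by simpa [Nat.sub_add_cancel hLK] using Nat.dvd_add h (dvd_refl L))]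
      simp
    · simp

lemma qBinom_one (N K : ℕ) : qBinom (1 : R) N K = N.choose K := by
  simpa using qBinom_mul_mul_of_isPrimitiveRoot (IsPrimitiveRoot.one (M := R)) one_pos N K

end IsDomain

end BinaryWords

section Words

variable {A : Type*} [LinearOrder A]

lemma le_of_letterCount_eq {N : ℕ} {w : Fin N → A} {m : A → ℕ} (hw : letterCount w = m) {a : A}
    (ha : ∀ c, a < c → m c = 0) (i : Fin N) : w i ≤ a := by
  by_contra h
  have : 0 < letterCount w (w i) := card_pos.mpr ⟨i, by simp⟩
  rw [hw, ha _ (not_le.mp h)] at this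
  exact lt_irrefl 0 this

variable [Fintype A]

def wordsWithContent (N : ℕ) (m : A → ℕ) : Finset (Fin N → A) := {w | letterCount w = m}

variable {R : Type*} [CommSemiring R] (q : R)

/-- Restriction to the positions `e` not occupied by the largest letter `a` matches the words with
`a`-pattern `b` with the words of the class with `a` removed. -/
lemma sum_wordsWithContent_filter_decide_eq {N M : ℕ} (m : A → ℕ) {a : A}
    (ha : ∀ c, a < c → m c = 0) (b : Fin N → Bool) (hb : wt b = m a) (e : Fin M ↪o Fin N)
    (he : ∀ i, b i = false ↔ i ∈ Set.range e) :
    ∑ w ∈ wordsWithContent N m with (fun i => decide (w i = a)) = b, q ^ invNum w =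
      q ^ invNum b * ∑ v ∈ wordsWithContent M (Function.update m a 0), q ^ invNum v := by
  have range_iff (w : Fin N → A) (hw : (fun i => decide (w i = a)) = b) (i : Fin N) :
      w i ≠ a ↔ i ∈ Set.range e := by
    rw [← he, ← congrFun hw i]
    simp
  rw [mul_sum]
  refine sum_nbij' (· ∘ e) (fun v => Function.extend e v fun _ => a) (fun w hw => ?_)
    (fun v hv => ?_) (fun w hw => ?_) (fun v _ => funext (e.injective.extend_apply v _))
    (fun w hw => ?_)
  · simp only [wordsWithContent, mem_filter, mem_univ, true_and] at hw ⊢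
    rw [letterCount_comp_of_range_eq e.injective w a (range_iff w hw.2), hw.1]
  · simp only [wordsWithContent, mem_filter, mem_univ, true_and] at hv ⊢
    have hva : ∀ j, v j ≠ a := letterCount_eq_zero_iff.mp (by simpa using congrFun hv a)
    have hmask : (fun i => decide (Function.extend e v (fun _ => a) i = a)) = b := by
      funext i
      rw [Bool.eq_iff_iff, decide_eq_true_iff, extend_apply_eq_iff_notMem_range e.injective hva,
        ← he, Bool.not_eq_false]
    refine ⟨funext fun c => ?_, hmask⟩
    rcases eq_or_ne c a with rfl | hc
    · rw [← hb, ← hmask]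
      simp [wt, letterCount]
    · have := congrFun (letterCount_comp_of_range_eq e.injective _ a (range_iff _ hmask)) c
      rw [Function.update_of_ne hc, Function.comp_def] at this
      simp only [e.injective.extend_apply] at this
      rw [← this, hv, Function.update_of_ne hc]
  · simp only [wordsWithContent, mem_filter, mem_univ, true_and] at hw
    exact extend_comp_eq_of_notMem_range e.injective fun i hi =>
      not_not.mp fun h => hi ((range_iff w hw.2 i).mp h)
  · simp only [wordsWithContent, mem_filter, mem_univ, true_and] at hw
    rw [invNum_eq_invNum_decide_add w a (le_of_letterCount_eq hw.1 ha) e (range_iff w hw.2),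
      hw.2, pow_add]

lemma sum_wordsWithContent_eq_qBinom_mul {N : ℕ} (m : A → ℕ) {a : A}
    (ha : ∀ c, a < c → m c = 0) :
    ∑ w ∈ wordsWithContent N m, q ^ invNum w =
      qBinom q N (m a) *
        ∑ v ∈ wordsWithContent (N - m a) (Function.update m a 0), q ^ invNum v := by
  rw [qBinom, sum_mul, ← sum_fiberwise_of_maps_to (g := fun w i => decide (w i = a))
    (t := {b | wt b = m a}) fun w hw => ?_]
  · refine sum_congr rfl fun b hb => ?_
    have hb : wt b = m a := (mem_filter.mp hb).2
    have hs : #{i | b i = false} = N - m a := by have := card_false_add_wt b; omega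
    exact sum_wordsWithContent_filter_decide_eq q m ha b hb (orderEmbOfFin _ hs) (by simp)
  · simp only [wordsWithContent, mem_filter, mem_univ, true_and] at hw ⊢
    rw [← hw]
    simp [wt, letterCount]

/-- The `q`-multinomial coefficient `[m₁ + ⋯ + mₖ; m₁, …, mₖ]_q`, written as a product of
Gaussian binomials along the order of `A`. -/
def qMultinomial (m : A → ℕ) : R := ∏ a, qBinom q (∑ b with b ≤ a, m b) (m a)

lemma qMultinomial_eq_qBinom_mul (m : A → ℕ) {a : A} (ha : ∀ c, a < c → m c = 0) :
    qMultinomial q m = qBinom q (∑ c, m c) (m a) * qMultinomial q (Function.update m a 0) := by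
  have htop : ∑ b with b ≤ a, m b = ∑ c, m c :=
    sum_filter_of_ne fun b _ hb => not_lt.mp fun h => hb (ha b h)
  unfold qMultinomial
  rw [← mul_prod_erase univ _ (mem_univ a), ← mul_prod_erase univ _ (mem_univ a), htop,
    Function.update_self, qBinom_zero_right, one_mul]
  refine congrArg _ (prod_congr rfl fun c hc => ?_)
  have hca := ne_of_mem_erase hc
  rw [Function.update_of_ne hca]
  rcases lt_or_gt_of_ne hca with h | h
  · congr 1
    refine sum_congr rfl fun b hb => (Function.update_of_ne ?_ _ _).symm
    exact ((mem_filter.mp hb).2.trans_lt h).ne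
  · rw [ha c h, qBinom_zero_right, qBinom_zero_right]

lemma exists_max_of_exists {p : A → Prop} (h : ∃ a, p a) : ∃ a, p a ∧ ∀ c, a < c → ¬ p c := by
  obtain ⟨a, ha, hmax⟩ := (Set.toFinite {a | p a}).exists_maximal h
  exact ⟨a, ha, fun c hac hc => not_le.mpr hac (hmax hc hac.le)⟩

theorem sum_wordsWithContent_pow_invNum (N : ℕ) (m : A → ℕ) (hm : ∑ a, m a = N) :
    ∑ w ∈ wordsWithContent N m, q ^ invNum w = qMultinomial q m := by
  induction N using Nat.strong_induction_on generalizing m with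
  | _ N ih =>
  by_cases hm0 : ∀ a, m a = 0
  · obtain rfl : m = 0 := funext hm0
    obtain rfl : N = 0 := by simp [← hm]
    simp [wordsWithContent, qMultinomial, qBinom_zero_right, letterCount, invNum, funext_iff]
  obtain ⟨a, ha0, ha⟩ := exists_max_of_exists (not_forall.mp hm0)
  simp only [not_not] at ha
  have hle : m a ≤ N := hm ▸ single_le_sum (by simp) (mem_univ a)
  have hsum : ∑ c, Function.update m a 0 c = N - m a := by
    rw [sum_update_of_mem (mem_univ a), ← hm, sum_eq_add_sum_sdiff_singleton_of_mem (mem_univ a)]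
    omega
  rw [sum_wordsWithContent_eq_qBinom_mul q m ha, ih _ (by omega) _ hsum,
    qMultinomial_eq_qBinom_mul q m ha, hm]

end Words

section Periodic

variable {α : Type*} {n g : ℕ}

def periodize (hg : 0 < g) (v : Fin g → α) : Fin n → α := fun i => v ⟨i % g, Nat.mod_lt _ hg⟩

lemma periodize_restrict (hg : 0 < g) (hgn : g ≤ n) {w : Fin n → α}
    (hw : Function.IsPeriodicPt cshift g w) :
    periodize hg (fun j : Fin g => w (Fin.castLE hgn j)) = w := by
  funext i
  have := congrFun (hw.mul_const (i / g)).eq ⟨i % g, (Nat.mod_lt _ hg).trans_le hgn⟩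
  rw [cshift_iterate_apply] at this
  simp only [Nat.mod_add_div, Nat.mod_eq_of_lt i.isLt] at this
  exact this.symm

lemma restrict_periodize (hg : 0 < g) (hgn : g ≤ n) (v : Fin g → α) :
    (fun j : Fin g => periodize (n := n) hg v (Fin.castLE hgn j)) = v :=
  funext fun j => by simp [periodize, Nat.mod_eq_of_lt j.isLt]

lemma isPeriodicPt_cshift_periodize {d : ℕ} (hg : 0 < g) (hgn : g ∣ n) (hgd : g ∣ d)
    (v : Fin g → α) : Function.IsPeriodicPt cshift d (periodize (n := n) hg v) := by
  obtain ⟨k, rfl⟩ := hgd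
  funext i
  simp [periodize, cshift_iterate_apply, Nat.mod_mod_of_dvd _ hgn, Nat.add_mul_mod_self_left]

lemma letterCount_periodize [DecidableEq α] {L : ℕ} (hg : 0 < g) (hn : L * g = n)
    (v : Fin g → α) : letterCount (periodize (n := n) hg v) = L • letterCount v := by
  rw [← letterCount_comp_equiv _ (finProdFinEquiv.trans (finCongr hn))]
  have : periodize hg v ∘ finProdFinEquiv.trans (finCongr hn) = fun x => v x.2 := by
    funext x
    simp [periodize, finProdFinEquiv, Nat.mod_eq_of_lt x.2.isLt]
  funext a
  simp only [this, letterCount, Pi.smul_apply, smul_eq_mul]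
  rw [← univ_product_univ, filter_product_right (fun j => v j = a), card_product, card_univ,
    Fintype.card_fin]

end Periodic

section CyclicSieving

variable {A : Type*} [LinearOrder A] [Fintype A] {n : ℕ}

lemma card_fixedPoints_wordsWithContent (hn : 0 < n) (d : ℕ) (m : A → ℕ) :
    #{w ∈ wordsWithContent n m | cshift^[d] w = w} =
      #{v : Fin (n.gcd d) → A | (n / n.gcd d) • letterCount v = m} := by
  have hg : 0 < n.gcd d := Nat.gcd_pos_of_pos_left d hn
  have hgn : n.gcd d ≤ n := Nat.le_of_dvd hn (Nat.gcd_dvd_left n d)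
  have hL : n / n.gcd d * n.gcd d = n := Nat.div_mul_cancel (Nat.gcd_dvd_left n d)
  have periodic (w : Fin n → A) (hw : cshift^[d] w = w) :
      Function.IsPeriodicPt cshift (n.gcd d) w :=
    (isPeriodicPt_cshift_self w).gcd hw
  refine card_nbij' (fun w j => w (Fin.castLE hgn j)) (periodize hg) (fun w hw => ?_)
    (fun v hv => ?_) (fun w hw => ?_) (fun v _ => restrict_periodize hg hgn v)
  · simp only [coe_filter, wordsWithContent, mem_filter, mem_univ, true_and,
      Set.mem_ofPred_eq] at hw ⊢
    rw [← hw.1, ← letterCount_periodize hg hL, periodize_restrict hg hgn (periodic w hw.2)]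
  · simp only [coe_filter, wordsWithContent, mem_filter, mem_univ, true_and,
      Set.mem_ofPred_eq] at hv ⊢
    exact ⟨by rw [letterCount_periodize hg hL, hv],
      isPeriodicPt_cshift_periodize hg (Nat.gcd_dvd_left n d) (Nat.gcd_dvd_right n d) v⟩
  · simp only [coe_filter, wordsWithContent, mem_filter, mem_univ, true_and,
      Set.mem_ofPred_eq] at hw
    exact periodize_restrict hg hgn (periodic w hw.2)

section IsDomain

variable {R : Type*} [CommRing R] [IsDomain R] {q : R} {L : ℕ}

lemma qMultinomial_nsmul_of_isPrimitiveRoot (hq : IsPrimitiveRoot q L) (hL : 0 < L)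
    (m : A → ℕ) : qMultinomial q (L • m) = qMultinomial 1 m := by
  refine prod_congr rfl fun a _ => ?_
  simp only [Pi.smul_apply, smul_eq_mul, ← mul_sum]
  rw [qBinom_one, qBinom_mul_mul_of_isPrimitiveRoot hq hL]

lemma qMultinomial_eq_zero_of_isPrimitiveRoot (hq : IsPrimitiveRoot q L) (hL : 0 < L)
    {m : A → ℕ} (hm : L ∣ ∑ a, m a) (h : ∃ a, ¬ L ∣ m a) : qMultinomial q m = 0 := by
  obtain ⟨a, ha, htop⟩ := exists_max_of_exists h
  -- the letters above `a` fill a multiple of `L` positions, hence so do the letters up to `a`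
  have hdvd_top : L ∣ ∑ b with ¬ b ≤ a, m b :=
    dvd_sum fun b hb => not_not.mp (htop b (not_le.mp (mem_filter.mp hb).2))
  obtain ⟨k, hk⟩ : L ∣ ∑ b with b ≤ a, m b :=
    (Nat.dvd_add_left hdvd_top).mp (by rwa [sum_filter_add_sum_filter_not])
  exact prod_eq_zero (mem_univ a)
    (by rw [hk]; exact qBinom_mul_eq_zero_of_isPrimitiveRoot hq hL k ha)

lemma card_fixedPoints_wordsWithContent_eq_sum (hn : 0 < n) (d : ℕ)
    (hq : IsPrimitiveRoot q (n / n.gcd d)) (m : A → ℕ) (hm : ∑ a, m a = n) :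
    (#{w ∈ wordsWithContent n m | cshift^[d] w = w} : R) =
      ∑ w ∈ wordsWithContent n m, q ^ invNum w := by
  rw [card_fixedPoints_wordsWithContent hn d, sum_wordsWithContent_pow_invNum q n m hm]
  set g := n.gcd d
  set L := n / g
  have hLg : L * g = n := Nat.div_mul_cancel (Nat.gcd_dvd_left n d)
  have hL : 0 < L := Nat.pos_of_ne_zero fun h => by simp [h] at hLg; omega
  by_cases hdvd : ∀ a, L ∣ m a
  · choose m₀ hm₀ using hdvd
    obtain rfl : m = L • m₀ := funext hm₀
    have hm₀g : ∑ a, m₀ a = g := by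
      apply Nat.eq_of_mul_eq_mul_left hL
      rw [mul_sum, hLg, ← hm]
      rfl
    have hset : ({v : Fin g → A | L • letterCount v = L • m₀} : Finset _) =
        wordsWithContent g m₀ := by
      ext v
      simp [wordsWithContent, funext_iff, hL.ne']
    rw [hset, qMultinomial_nsmul_of_isPrimitiveRoot hq hL,
      ← sum_wordsWithContent_pow_invNum (1 : R) g m₀ hm₀g]
    simp
  · have hempty : ({v : Fin g → A | L • letterCount v = m} : Finset _) = ∅ := by
      ext v
      simp only [mem_filter, mem_univ, true_and, notMem_empty, iff_false]
      rintro rfl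
      exact hdvd fun a => dvd_mul_right L _
    rw [hempty, card_empty, Nat.cast_zero, qMultinomial_eq_zero_of_isPrimitiveRoot hq hL
      (hm ▸ hLg ▸ dvd_mul_right L g) (not_forall.mp hdvd)]

end IsDomain

lemma sum_eq_sum_image_letterCount {M : Type*} [AddCommMonoid M] (X : Finset (Fin n → A))
    (hX : ∀ σ : Equiv.Perm (Fin n), ∀ w ∈ X, (fun i => w (σ i)) ∈ X) (f : (Fin n → A) → M) :
    ∑ w ∈ X, f w = ∑ m ∈ X.image letterCount, ∑ w ∈ wordsWithContent n m, f w := by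
  refine (sum_image' (g := letterCount) (f := fun m => ∑ w ∈ wordsWithContent n m, f w) f
    fun w hw => congrArg (∑ u ∈ ·, f u) ?_).symm
  ext u
  simp only [wordsWithContent, mem_filter, mem_univ, true_and, iff_and_self]
  intro hu
  obtain ⟨σ, rfl⟩ := exists_perm_of_letterCount_eq hu
  exact hX σ w hw

end CyclicSieving

/-- If X ⊆ A^n (with A a finite linearly ordered alphabet, n ≥ 1)
is stable under the symmetric group acting on positions, then (X, X^inv(t), C)
exhibits the cyclic sieving phenomenon. -/
theorem stmt1 {A : Type*} [Fintype A] [LinearOrder A] {n : ℕ} (hn : 1 ≤ n)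
    (X : Finset (Fin n → A))
    (hX : ∀ σ : Equiv.Perm (Fin n), ∀ w ∈ X, (fun i => w (σ i)) ∈ X) :
    exhibitsCSP X invNum := by
  intro d
  set ζ : ℂ := Complex.exp (2 * Real.pi * Complex.I / n)
  have hζ : IsPrimitiveRoot ζ n := Complex.isPrimitiveRoot_exp n (by omega)
  have hg : 0 < n.gcd d := Nat.gcd_pos_of_pos_left d hn
  have hq : IsPrimitiveRoot (ζ ^ d) (n / n.gcd d) := by
    have := (hζ.pow_of_dvd hg.ne' (Nat.gcd_dvd_left n d)).pow_of_coprime (d / n.gcd d)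
      (Nat.coprime_div_gcd_div_gcd hg).symm
    rwa [← pow_mul, Nat.mul_div_cancel' (Nat.gcd_dvd_right n d)] at this
  have hcontent : ∀ m ∈ X.image letterCount, ∑ a, m a = n := by
    simp only [mem_image]
    rintro _ ⟨u, -, rfl⟩
    simpa using sum_letterCount u
  simp_rw [pow_mul]
  rw [natCast_card_filter, sum_eq_sum_image_letterCount X hX, sum_eq_sum_image_letterCount X hX]
  refine sum_congr rfl fun m hm => ?_
  rw [← natCast_card_filter]
  exact card_fixedPoints_wordsWithContent_eq_sum hn d hq m (hcontent m hm)
end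

section
/- Let w = (w_1,…,w_n) be a word of length n ≥ 1 over a linearly ordered alphabet A, and let c(w) = (w_2,…,w_n,w_1). Then maj(c(w)) = maj(w) − cdes(w) if w_n ≤ w_1, and maj(c(w)) = maj(w) − cdes(w) + n if w_n > w_1. In particular, maj(c(w)) ≡ maj(w) − cdes(w) (mod n). -/
/-!
Both `maj (c w) + cdes w` and `maj w + n · [w₁ < wₙ]` equal `∑ⱼ (j + 1) · dⱼ`, where `dⱼ` is the
indicator of a cyclic descent at the (0-indexed) position `j`. For the first, a descent of `c w` at
`i` is the cyclic descent of `w` at `j = i + 1`, so `maj (c w) = ∑ⱼ j · dⱼ`, and adding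
`cdes w = ∑ⱼ dⱼ` raises every weight by one. For the second, the terms with `j < n - 1` are exactly
the summands of `maj w`, and the remaining one is the wrap-around descent `wₙ > w₁` with weight `n`.
-/

namespace CyclicWord

variable {A : Type*} {m : ℕ}

theorem cshift_castSucc (w : Fin (m + 1) → A) (i : Fin m) : cshift w i.castSucc = w i.succ := by
  simp only [cshift, Fin.val_castSucc, Nat.mod_eq_of_lt (Nat.succ_lt_succ i.isLt)]
  rfl

theorem cshift_last (w : Fin (m + 1) → A) : cshift w (Fin.last m) = w 0 := by
  simp only [cshift, Fin.val_last, Nat.mod_self]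
  rfl

variable [LinearOrder A]

/-- `cshift w j` is the letter cyclically following `w j`, so this is the indicator of a cyclic
descent at `j`. -/
def cdesInd {n : ℕ} (w : Fin n → A) (j : Fin n) : ℕ :=
  if cshift w j < w j then 1 else 0

theorem cdes_eq_sum_cdesInd {n : ℕ} (w : Fin n → A) : cdes w = ∑ j, cdesInd w j :=
  Finset.card_filter _ _

theorem majIdx_eq_sum (w : Fin (m + 1) → A) :
    majIdx w = ∑ i : Fin m, if w i.succ < w i.castSucc then (i : ℕ) + 1 else 0 := by
  rw [majIdx, Fin.sum_univ_castSucc]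
  simp only [Fin.val_last, lt_irrefl, dite_false, add_zero, Fin.val_castSucc,
    Nat.succ_lt_succ_iff, Fin.is_lt, dite_true]
  rfl

theorem cdesInd_castSucc (w : Fin (m + 1) → A) (i : Fin m) :
    cdesInd w i.castSucc = if w i.succ < w i.castSucc then 1 else 0 := by
  rw [cdesInd, cshift_castSucc]

theorem cdesInd_last (w : Fin (m + 1) → A) :
    cdesInd w (Fin.last m) = if w 0 < w (Fin.last m) then 1 else 0 := by
  rw [cdesInd, cshift_last]

theorem sum_succ_mul_cdesInd_eq_majIdx_add (w : Fin (m + 1) → A) :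
    ∑ j : Fin (m + 1), ((j : ℕ) + 1) * cdesInd w j =
      majIdx w + (m + 1) * cdesInd w (Fin.last m) := by
  rw [Fin.sum_univ_castSucc, majIdx_eq_sum, Fin.val_last]
  congr 1
  refine Finset.sum_congr rfl fun i _ => ?_
  rw [cdesInd_castSucc, Fin.val_castSucc]
  split_ifs <;> simp

theorem sum_succ_mul_cdesInd_eq_majIdx_cshift_add (w : Fin (m + 1) → A) :
    ∑ j : Fin (m + 1), ((j : ℕ) + 1) * cdesInd w j = majIdx (cshift w) + cdes w := by
  rw [majIdx_eq_sum, cdes_eq_sum_cdesInd, Fin.sum_univ_succ, Fin.sum_univ_succ (f := cdesInd w),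
    Fin.val_zero, zero_add, one_mul, add_left_comm, ← Finset.sum_add_distrib]
  congr 1
  refine Finset.sum_congr rfl fun i _ => ?_
  rw [cshift_castSucc, cdesInd, Fin.val_succ]
  split_ifs <;> ring

theorem majIdx_cshift_add_cdes (w : Fin (m + 1) → A) :
    majIdx (cshift w) + cdes w =
      majIdx w + (m + 1) * if w 0 < w (Fin.last m) then 1 else 0 := by
  rw [← sum_succ_mul_cdesInd_eq_majIdx_cshift_add, sum_succ_mul_cdesInd_eq_majIdx_add,
    cdesInd_last]

end CyclicWord

/-- with c(w) = (w_2,…,w_n,w_1), one has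
maj(c(w)) = maj(w) - cdes(w) if w_n ≤ w_1, and
maj(c(w)) = maj(w) - cdes(w) + n if w_n > w_1; in particular
maj(c(w)) ≡ maj(w) - cdes(w) (mod n). -/
theorem stmt3 {A : Type*} [LinearOrder A] {n : ℕ} (hn : 1 ≤ n) (w : Fin n → A) :
    (w ⟨n - 1, by omega⟩ ≤ w ⟨0, by omega⟩ →
      (majIdx (cshift w) : ℤ) = (majIdx w : ℤ) - cdes w) ∧
    (w ⟨0, by omega⟩ < w ⟨n - 1, by omega⟩ →
      (majIdx (cshift w) : ℤ) = (majIdx w : ℤ) - cdes w + n) ∧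
    Int.ModEq (n : ℤ) (majIdx (cshift w)) ((majIdx w : ℤ) - cdes w) := by
  obtain ⟨m, rfl⟩ : ∃ m, n = m + 1 := ⟨n - 1, by omega⟩
  have hlast : (⟨m + 1 - 1, by omega⟩ : Fin (m + 1)) = Fin.last m := Fin.ext (by simp)
  have hzero : (⟨0, by omega⟩ : Fin (m + 1)) = 0 := rfl
  have key := CyclicWord.majIdx_cshift_add_cdes w
  rw [hlast, hzero]
  split_ifs at key with hwrap
  · have h : (majIdx (cshift w) : ℤ) = majIdx w - cdes w + ↑(m + 1) := by omega
    exact ⟨fun hle => absurd hwrap (not_lt.2 hle), fun _ => h, h ▸ Int.add_modEq_right⟩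
  · have h : (majIdx (cshift w) : ℤ) = majIdx w - cdes w := by omega
    exact ⟨fun _ => h, fun hlt => absurd hlt hwrap, h ▸ Int.ModEq.refl _⟩
end

section
/- Let w = (w_1,…,w_n) be a word of length n ≥ 1 over a linearly ordered alphabet A whose C-orbit is free, i.e., the n cyclic shifts w, c(w), c^2(w), …, c^{n−1}(w) are pairwise distinct. Then in ℤ[t] one has the congruence Σ_{j=0}^{n−1} t^{maj(c^j(w))} ≡ t^{maj(w)} · Σ_{j=0}^{n−1} t^{j·cdes(w)} (mod t^n − 1). -/
namespace Stmt5Aux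
variable {A : Type*} [LinearOrder A] {n : ℕ} [NeZero n]

/-- cyclic descent set -/
def cDesSet {A : Type*} [LinearOrder A] {n : ℕ} (w : Fin n → A) : Finset (Fin n) :=
  Finset.univ.filter fun i : Fin n =>
    w ⟨((i : ℕ) + 1) % n, Nat.mod_lt _ i.pos⟩ < w i

lemma succ_eq (i : Fin n) : (⟨((i : ℕ) + 1) % n, Nat.mod_lt _ i.pos⟩ : Fin n) = i + 1 := by
  apply Fin.ext
  show ((i : ℕ) + 1) % n = ((i : ℕ) + (1 : Fin n).val) % n
  rw [Fin.val_one', Nat.add_mod, Nat.mod_eq_of_lt i.isLt]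

omit [LinearOrder A] in
lemma cshift_apply (w : Fin n → A) (i : Fin n) : cshift w i = w (i + 1) := by
  rw [cshift, succ_eq]

lemma mem_cDesSet (w : Fin n → A) (i : Fin n) : i ∈ cDesSet w ↔ w (i + 1) < w i := by
  unfold cDesSet
  rw [Finset.mem_filter, succ_eq]
  simp

omit [NeZero n] in
lemma cdes_eq (w : Fin n → A) : cdes w = (cDesSet w).card := rfl

lemma cdes_cshift (w : Fin n → A) : cdes (cshift w) = cdes w := by
  rw [cdes_eq, cdes_eq]
  refine Finset.card_equiv (Equiv.addRight (1 : Fin n)) fun i => ?_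
  simp only [mem_cDesSet, cshift_apply, Equiv.coe_addRight]

lemma mk_succ_eq (i : Fin n) (h : (i : ℕ) + 1 < n) : (⟨(i : ℕ) + 1, h⟩ : Fin n) = i + 1 := by
  rw [← succ_eq i]
  exact Fin.ext (by simp [Nat.mod_eq_of_lt h])

lemma claimA (w : Fin n → A) :
    ∑ i ∈ cDesSet w, ((i : ℕ) + 1) =
      majIdx w +
        (if (⟨n - 1, Nat.sub_lt (NeZero.pos n) one_pos⟩ : Fin n) ∈ cDesSet w then n else 0) := by
  have hn := Nat.pos_of_ne_zero (NeZero.ne n)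
  set L : Fin n := ⟨n - 1, by omega⟩ with hL
  have key : ∀ i : Fin n,
      (if i ∈ cDesSet w then (i : ℕ) + 1 else 0)
        = (if h : (i : ℕ) + 1 < n then (if w ⟨(i : ℕ) + 1, h⟩ < w i then (i : ℕ) + 1 else 0)
            else 0)
          + (if i = L then (if L ∈ cDesSet w then n else 0) else 0) := by
    intro i
    by_cases h : (i : ℕ) + 1 < n
    · have hiL : i ≠ L := by
        intro e
        rw [e] at h
        simp only [hL] at h
        omega
      rw [dif_pos h, if_neg hiL, add_zero]
      have : (i ∈ cDesSet w) ↔ w ⟨(i : ℕ) + 1, h⟩ < w i := by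
        rw [mem_cDesSet, mk_succ_eq i h]
      simp only [this]
    · have hiL : i = L := by
        apply Fin.ext
        have := i.isLt
        simp only [hL]
        omega
      have hv : (i : ℕ) + 1 = n := by have := i.isLt; omega
      rw [dif_neg h, if_pos hiL, zero_add, ← hiL, hv]
  have h0 : (∑ i ∈ cDesSet w, ((i : ℕ) + 1))
      = ∑ i : Fin n, (if i ∈ cDesSet w then (i : ℕ) + 1 else 0) := by
    rw [Finset.sum_ite_mem, Finset.univ_inter]
  rw [h0, Finset.sum_congr rfl (fun i _ => key i), Finset.sum_add_distrib]
  congr 1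
  rw [Finset.sum_ite_eq' Finset.univ L (fun _ => if L ∈ cDesSet w then n else 0)]
  simp

lemma claimB (w : Fin n → A) :
    majIdx (cshift w) = ∑ i ∈ cDesSet w, (i : ℕ) := by
  have hn := Nat.pos_of_ne_zero (NeZero.ne n)
  set F : Fin n → ℕ := fun k => if k ∈ cDesSet w then (k : ℕ) else 0 with hF
  have key : ∀ i : Fin n,
      (if h : (i : ℕ) + 1 < n then
          (if (cshift w) ⟨(i : ℕ) + 1, h⟩ < (cshift w) i then (i : ℕ) + 1 else 0) else 0)
        = F (i + 1) := by
    intro i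
    by_cases h : (i : ℕ) + 1 < n
    · rw [dif_pos h, hF]
      have hval : ((i + 1 : Fin n) : ℕ) = (i : ℕ) + 1 := by
        rw [← mk_succ_eq i h]
      have hcond : ((cshift w) ⟨(i : ℕ) + 1, h⟩ < (cshift w) i) ↔ (i + 1) ∈ cDesSet w := by
        rw [mk_succ_eq i h, cshift_apply, cshift_apply, mem_cDesSet]
      simp only [hcond, hval]
    · have hz : i + 1 = (0 : Fin n) := by
        apply Fin.ext
        rw [← succ_eq i]
        have := i.isLt
        simp only [Fin.val_zero]
        have : (i : ℕ) + 1 = n := by omega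
        simp [this]
      rw [dif_neg h, hz, hF]
      simp
  unfold majIdx
  rw [Finset.sum_congr rfl (fun i _ => key i)]
  rw [Fintype.sum_equiv (Equiv.addRight (1 : Fin n)) (fun i => F (i + 1)) F (fun i => rfl)]
  rw [hF]
  rw [show (∑ k : Fin n, if k ∈ cDesSet w then (k : ℕ) else 0)
      = ∑ k ∈ Finset.univ ∩ cDesSet w, (k : ℕ) from Finset.sum_ite_mem _ _ _,
    Finset.univ_inter]

lemma maj_step (w : Fin n → A) : majIdx (cshift w) + cdes w ≡ majIdx w [MOD n] := by
  have hA := claimA w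
  have hB := claimB w
  have heq : majIdx (cshift w) + cdes w
      = majIdx w + (if (⟨n - 1, Nat.sub_lt (NeZero.pos n) one_pos⟩ : Fin n) ∈ cDesSet w then n else 0) := by
    rw [hB, cdes_eq, ← hA, Finset.sum_add_distrib, Finset.sum_const, smul_eq_mul, mul_one]
  rw [heq]
  split
  · calc majIdx w + n ≡ majIdx w + 0 [MOD n] :=
          Nat.ModEq.add_left _ ((Nat.modEq_zero_iff_dvd).mpr dvd_rfl)
      _ = majIdx w := by rw [add_zero]
  · rw [add_zero]

lemma maj_iter (w : Fin n → A) (j : ℕ) :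
    majIdx (cshift^[j] w) + j * cdes w ≡ majIdx w [MOD n] := by
  induction j generalizing w with
  | zero => simpa using Nat.ModEq.refl (majIdx w)
  | succ j ih =>
    have h1 := ih (cshift w)
    rw [cdes_cshift] at h1
    have h2 := maj_step w
    have e : majIdx (cshift^[j] (cshift w)) + (j + 1) * cdes w
        = (majIdx (cshift^[j] (cshift w)) + j * cdes w) + cdes w := by ring
    rw [Function.iterate_succ_apply, e]
    exact (h1.add_right (cdes w)).trans h2

lemma dvd_aux {n a b : ℕ} (h : a ≡ b [MOD n]) :
    ((Polynomial.X : Polynomial ℤ) ^ n - 1) ∣ Polynomial.X ^ a - Polynomial.X ^ b := by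
  have main : ∀ a b : ℕ, b ≤ a → a ≡ b [MOD n] →
      ((Polynomial.X : Polynomial ℤ) ^ n - 1) ∣ Polynomial.X ^ a - Polynomial.X ^ b := by
    intro a b hba h
    obtain ⟨k, hk⟩ := (Nat.modEq_iff_dvd' hba).mp h.symm
    have e : (Polynomial.X : Polynomial ℤ) ^ a - Polynomial.X ^ b
        = Polynomial.X ^ b * (((Polynomial.X : Polynomial ℤ) ^ n) ^ k - 1 ^ k) := by
      rw [one_pow, mul_sub, mul_one, ← pow_mul, ← pow_add]
      have h2 : a = b + n * k := by omega
      rw [h2]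
    rw [e]
    exact (sub_dvd_pow_sub_pow ((Polynomial.X : Polynomial ℤ) ^ n) 1 k).mul_left _
  rcases le_total b a with hba | hab
  · exact main a b hba h
  · have := main b a hab h.symm
    rw [show (Polynomial.X : Polynomial ℤ) ^ a - Polynomial.X ^ b
        = -(Polynomial.X ^ b - Polynomial.X ^ a) by ring]
    exact this.neg_right

lemma invol {n : ℕ} (hn : 0 < n) {a : ℕ} (ha : a < n) : (n - (n - a) % n) % n = a := by
  rcases Nat.eq_zero_or_pos a with rfl | hpos
  · rw [Nat.sub_zero, Nat.mod_self, Nat.sub_zero, Nat.mod_self]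
  · have h1 : (n - a) % n = n - a := Nat.mod_eq_of_lt (by omega)
    rw [h1, Nat.sub_sub_self (le_of_lt ha), Nat.mod_eq_of_lt ha]

end Stmt5Aux

/-- if the C-orbit of w is free (the n cyclic shifts are pairwise distinct),
then in ℤ[t] one has
Σ_{j=0}^{n-1} t^{maj(c^j(w))} ≡ t^{maj w} · Σ_{j=0}^{n-1} t^{j·cdes w}  (mod t^n - 1). -/
theorem stmt5 {A : Type*} [LinearOrder A] {n : ℕ} (hn : 1 ≤ n) (w : Fin n → A)
    (hfree : ∀ i j : Fin n, cshift^[(i : ℕ)] w = cshift^[(j : ℕ)] w → i = j) :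
    ((Polynomial.X : Polynomial ℤ) ^ n - 1) ∣
      ((∑ j ∈ Finset.range n, (Polynomial.X : Polynomial ℤ) ^ majIdx (cshift^[j] w)) -
        Polynomial.X ^ majIdx w *
          ∑ j ∈ Finset.range n, (Polynomial.X : Polynomial ℤ) ^ (j * cdes w)) := by
  haveI : NeZero n := ⟨by omega⟩
  have hn0 : 0 < n := hn
  set c := cdes w with hc
  -- rewrite RHS as a single sum
  have hR : Polynomial.X ^ majIdx w *
        ∑ j ∈ Finset.range n, (Polynomial.X : Polynomial ℤ) ^ (j * c)
      = ∑ j ∈ Finset.range n, (Polynomial.X : Polynomial ℤ) ^ (majIdx w + j * c) := by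
    rw [Finset.mul_sum]
    exact Finset.sum_congr rfl fun j _ => by rw [← pow_add]
  -- reindex by the involution j ↦ (n - j) % n
  have hRe : ∑ j ∈ Finset.range n, (Polynomial.X : Polynomial ℤ) ^ (majIdx w + j * c)
      = ∑ j ∈ Finset.range n,
          (Polynomial.X : Polynomial ℤ) ^ (majIdx w + ((n - j) % n) * c) := by
    refine Finset.sum_nbij' (fun j => (n - j) % n) (fun j => (n - j) % n) ?_ ?_ ?_ ?_ ?_
    · intro a ha; exact Finset.mem_range.mpr (Nat.mod_lt _ hn0)
    · intro a ha; exact Finset.mem_range.mpr (Nat.mod_lt _ hn0)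
    · intro a ha; exact Stmt5Aux.invol hn0 (Finset.mem_range.mp ha)
    · intro a ha; exact Stmt5Aux.invol hn0 (Finset.mem_range.mp ha)
    · intro a ha
      congr 2
      rw [Stmt5Aux.invol hn0 (Finset.mem_range.mp ha)]
  rw [hR, hRe, ← Finset.sum_sub_distrib]
  refine Finset.dvd_sum fun j hj => ?_
  have hjn : j < n := Finset.mem_range.mp hj
  apply Stmt5Aux.dvd_aux
  -- maj (c^[j] w) ≡ maj w + ((n-j) % n) * c [MOD n]
  apply Nat.ModEq.add_right_cancel' (j * c)
  have h1 : majIdx (cshift^[j] w) + j * c ≡ majIdx w [MOD n] := Stmt5Aux.maj_iter w j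
  have h2 : (majIdx w + ((n - j) % n) * c) + j * c ≡ majIdx w [MOD n] := by
    have hm : ((n - j) % n + j) ≡ 0 [MOD n] := by
      rcases Nat.eq_zero_or_pos j with rfl | hjp
      · rw [Nat.sub_zero, Nat.mod_self]
      · rw [Nat.mod_eq_of_lt (by omega), Nat.sub_add_cancel (le_of_lt hjn)]
        exact (Nat.modEq_zero_iff_dvd).mpr dvd_rfl
    calc (majIdx w + ((n - j) % n) * c) + j * c
        = majIdx w + ((n - j) % n + j) * c := by ring
      _ ≡ majIdx w + 0 * c [MOD n] := Nat.ModEq.add_left _ (hm.mul_right c)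
      _ = majIdx w := by ring
  exact h1.trans h2.symm
end

section
/- Let 𝔽_q be a finite field, n ≥ 1, g(x) ∈ 𝔽_q[x] a monic divisor of x^n − 1, g⊥(x) = (x^n−1)/g(x), and let 𝒞 ⊆ 𝔽_q^n be the cyclic code generated by g. Then the action of the cyclic group C of order n (generated by the cyclic shift c) on 𝒞 ∖ {0} is free — i.e., c^j(w) ≠ w for every nonzero codeword w ∈ 𝒞 and every j with 0 < j < n — if and only if gcd(g⊥(x), x^d − 1) = 1 in 𝔽_q[x] for every proper divisor d of n (i.e., every d with d | n and 1 ≤ d < n). -/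
/-- The polynomial `w₁ + w₂ x + ⋯ + wₙ x^{n-1}` associated to a word `w ∈ F^n` under
the standard identification of `F^n` with `F[x]/(xⁿ-1)`.  A word `w` belongs to the
cyclic code generated by a monic divisor `g` of `xⁿ - 1` exactly when `g ∣ wordPoly w`. -/
noncomputable def wordPoly {F : Type*} [CommRing F] {n : ℕ} (w : Fin n → F) :
    Polynomial F :=
  ∑ i : Fin n, Polynomial.C (w i) * Polynomial.X ^ (i : ℕ)

/-!
Identify a word `w` with `P(w) = wordPoly w`. Since `x · P(c w) = P(w) + w₁ (xⁿ - 1)`,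
the shift `c` acts as multiplication by `x⁻¹` modulo `xⁿ - 1`; as `x` is invertible there
and `P` is a bijection onto the polynomials of degree `< n`, `c^j` fixes `w` iff
`xⁿ - 1 ∣ (x^j - 1) P(w)`. For a codeword `P(w) = g a` this reads `g⊥ ∣ (x^d - 1) a`.
If `g⊥` is coprime to `x^d - 1` this forces `g⊥ ∣ a`, i.e. `xⁿ - 1 ∣ P(w)`, so `w = 0`;
otherwise `a = g⊥ / h` for a nonconstant common factor `h` gives a nonzero fixed codeword.
A word fixed by `c^j` and by `c^n = 1` is fixed by `c^gcd(j, n)`, which reduces `0 < j < n`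
to the proper divisors of `n`.
-/

open Polynomial Function

section CommRing

variable {R : Type*} [CommRing R] {n : ℕ}

lemma wordPoly_eq_degreeLTEquiv_symm (w : Fin n → R) :
    wordPoly w = ((degreeLTEquiv R n).symm w : R[X]) := by
  simp only [wordPoly, C_mul_X_pow_eq_monomial]
  rfl

@[simp]
lemma wordPoly_zero : wordPoly (0 : Fin n → R) = 0 := by
  simp [wordPoly]

lemma degree_wordPoly_lt (w : Fin n → R) : (wordPoly w).degree < n := by
  rw [wordPoly_eq_degreeLTEquiv_symm]
  exact mem_degreeLT.mp (Subtype.prop _)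

lemma wordPoly_injective : Injective (wordPoly : (Fin n → R) → R[X]) := by
  intro w v h
  simp only [wordPoly_eq_degreeLTEquiv_symm] at h
  exact (degreeLTEquiv R n).symm.injective (Subtype.val_injective h)

lemma exists_wordPoly_eq_of_degree_lt {p : R[X]} (hp : p.degree < n) :
    ∃ w : Fin n → R, wordPoly w = p :=
  ⟨degreeLTEquiv R n ⟨p, mem_degreeLT.mpr hp⟩, by
    rw [wordPoly_eq_degreeLTEquiv_symm, LinearEquiv.symm_apply_apply]⟩

lemma X_mul_wordPoly_cshift (w : Fin (n + 1) → R) :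
    X * wordPoly (cshift w) = wordPoly w + C (w 0) * (X ^ (n + 1) - 1) := by
  have hlast : cshift w (Fin.last n) = w 0 := by
    simp [cshift]
  have hcast : ∀ i : Fin n, cshift w i.castSucc = w i.succ := fun i => by
    simp only [cshift, Fin.val_castSucc]
    congr 1
    ext
    simp [Nat.mod_eq_of_lt (Nat.succ_lt_succ i.isLt)]
  rw [wordPoly, wordPoly, Fin.sum_univ_castSucc, Fin.sum_univ_succ]
  have hterm (i : Fin n) :
      X * (C (w i.succ) * X ^ (i : ℕ)) = C (w i.succ) * X ^ ((i : ℕ) + 1) := by ring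
  simp only [hlast, hcast, Fin.val_castSucc, Fin.val_succ, Fin.val_last, Fin.val_zero, mul_add,
    Finset.mul_sum, hterm]
  ring

lemma X_pow_sub_one_dvd_X_pow_mul_wordPoly_iterate_cshift_sub (w : Fin n → R) (j : ℕ) :
    (X ^ n - 1 : R[X]) ∣ X ^ j * wordPoly (cshift^[j] w) - wordPoly w := by
  induction j with
  | zero => simp
  | succ j ih =>
    obtain _ | m := n
    · simp [wordPoly]
    have hstep : X ^ (j + 1) * wordPoly (cshift^[j + 1] w) - wordPoly w =
        X ^ j * (C (cshift^[j] w 0) * (X ^ (m + 1) - 1)) +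
          (X ^ j * wordPoly (cshift^[j] w) - wordPoly w) := by
      rw [iterate_succ_apply', pow_succ, mul_assoc, X_mul_wordPoly_cshift]
      ring
    rw [hstep]
    exact dvd_add (dvd_mul_of_dvd_right (dvd_mul_left _ _) _) ih

lemma X_pow_sub_one_ne_zero [Nontrivial R] (hn : 0 < n) : (X ^ n - 1 : R[X]) ≠ 0 :=
  C_1 (R := R) ▸ X_pow_sub_C_ne_zero hn 1

lemma isCoprime_X_X_pow_sub_one (hn : 0 < n) : IsCoprime (X : R[X]) (X ^ n - 1) :=
  ⟨X ^ (n - 1), -1, by rw [mul_comm, ← pow_succ', Nat.sub_add_cancel hn]; ring⟩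

lemma eq_of_X_pow_sub_one_dvd_wordPoly_sub (hn : 0 < n) {w v : Fin n → R}
    (h : (X ^ n - 1 : R[X]) ∣ wordPoly w - wordPoly v) : w = v := by
  nontriviality R
  have hmonic : (X ^ n - 1 : R[X]).Monic := by
    rw [← C_1]; exact monic_X_pow_sub_C 1 hn.ne'
  have hdeg : (wordPoly w - wordPoly v).degree < (X ^ n - 1 : R[X]).degree := by
    rw [← C_1, degree_X_pow_sub_C hn]
    exact (degree_sub_le _ _).trans_lt (max_lt (degree_wordPoly_lt w) (degree_wordPoly_lt v))
  refine wordPoly_injective (sub_eq_zero.mp ?_)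
  by_contra h0
  exact hmonic.not_dvd_of_degree_lt h0 hdeg h

lemma isPeriodicPt_cshift_iff (hn : 0 < n) (w : Fin n → R) (j : ℕ) :
    IsPeriodicPt cshift j w ↔ (X ^ n - 1 : R[X]) ∣ (X ^ j - 1) * wordPoly w := by
  have hsplit : (X ^ j - 1) * wordPoly w = X ^ j * (wordPoly w - wordPoly (cshift^[j] w)) +
      (X ^ j * wordPoly (cshift^[j] w) - wordPoly w) := by ring
  rw [hsplit, dvd_add_left (X_pow_sub_one_dvd_X_pow_mul_wordPoly_iterate_cshift_sub w j)]
  constructor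
  · intro h
    rw [h.eq, sub_self, mul_zero]
    exact dvd_zero _
  · intro h
    exact (eq_of_X_pow_sub_one_dvd_wordPoly_sub hn
      ((isCoprime_X_X_pow_sub_one hn).pow_left.symm.dvd_of_dvd_mul_left h)).symm

lemma isPeriodicPt_cshift_length (hn : 0 < n) (w : Fin n → R) : IsPeriodicPt cshift n w :=
  (isPeriodicPt_cshift_iff hn w n).mpr (dvd_mul_right _ _)

lemma isPeriodicPt_cshift_iff_of_wordPoly_eq [IsDomain R] (hn : 0 < n) {g gperp : R[X]}
    (hg : g * gperp = X ^ n - 1) {w : Fin n → R} {a : R[X]} (hw : wordPoly w = g * a) (d : ℕ) :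
    IsPeriodicPt cshift d w ↔ gperp ∣ (X ^ d - 1) * a := by
  have hg0 : g ≠ 0 := left_ne_zero_of_mul (hg ▸ X_pow_sub_one_ne_zero hn)
  rw [isPeriodicPt_cshift_iff hn, hw, ← hg, mul_left_comm, mul_dvd_mul_iff_left hg0]

end CommRing

lemma exists_isPeriodicPt_cshift_codeword_iff {F : Type*} [Field F] {n : ℕ} (hn : 0 < n)
    {g gperp : F[X]} (hg : g * gperp = X ^ n - 1) (d : ℕ) :
    (∃ w : Fin n → F, g ∣ wordPoly w ∧ w ≠ 0 ∧ IsPeriodicPt cshift d w) ↔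
      ¬IsCoprime gperp (X ^ d - 1) := by
  have hM : (X ^ n - 1 : F[X]) ≠ 0 := X_pow_sub_one_ne_zero hn
  have hgperp0 : gperp ≠ 0 := right_ne_zero_of_mul (hg ▸ hM)
  constructor
  · rintro ⟨w, ⟨a, ha⟩, hw0, hper⟩ hcop
    have ha' : gperp ∣ a :=
      hcop.dvd_of_dvd_mul_left ((isPeriodicPt_cshift_iff_of_wordPoly_eq hn hg ha d).mp hper)
    have hdvd : (X ^ n - 1 : F[X]) ∣ wordPoly w - wordPoly (0 : Fin n → F) := by
      rw [wordPoly_zero, sub_zero, ha, ← hg]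
      exact mul_dvd_mul_left g ha'
    exact hw0 (eq_of_X_pow_sub_one_dvd_wordPoly_sub hn hdvd)
  · intro hnc
    obtain ⟨h, hh, hh0, ⟨a, rfl⟩, b, hb⟩ :
        ∃ h ∈ nonunits F[X], h ≠ 0 ∧ h ∣ gperp ∧ h ∣ X ^ d - 1 := by
      by_contra! H
      exact hnc (EuclideanDomain.isCoprime_of_dvd (fun h0 => hgperp0 h0.1) H)
    have hprod : g * a * h = X ^ n - 1 := by rw [← hg]; ring
    have hga0 : g * a ≠ 0 := left_ne_zero_of_mul (by rwa [hprod])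
    have hdeg : (g * a).degree < n := by
      have hh_pos := natDegree_pos_iff_degree_pos.mpr (degree_pos_of_ne_zero_of_nonunit hh0 hh)
      have hsum := natDegree_mul hga0 hh0
      rw [hprod, ← C_1, natDegree_X_pow_sub_C] at hsum
      exact (natDegree_lt_iff_degree_lt hga0).mp (by omega)
    obtain ⟨w, hw⟩ := exists_wordPoly_eq_of_degree_lt hdeg
    refine ⟨w, ⟨a, hw⟩, ?_,
      (isPeriodicPt_cshift_iff_of_wordPoly_eq hn hg hw d).mpr ⟨b, by rw [hb]; ring⟩⟩
    rintro rfl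
    exact hga0 (hw ▸ wordPoly_zero)

theorem stmt11_general {F : Type*} [Field F] {n : ℕ} (hn : 1 ≤ n)
    (g : Polynomial F) (gperp : Polynomial F) (hgperp : g * gperp = Polynomial.X ^ n - 1) :
    (∀ w : Fin n → F, g ∣ wordPoly w → w ≠ 0 →
        ∀ j : ℕ, 0 < j → j < n → cshift^[j] w ≠ w) ↔
      (∀ d : ℕ, d ∣ n → 1 ≤ d → d < n →
        IsCoprime gperp (Polynomial.X ^ d - 1)) := by
  constructor
  · intro hfree d _ hd hdn
    by_contra hnc
    obtain ⟨w, hw, hw0, hfix⟩ := (exists_isPeriodicPt_cshift_codeword_iff hn hgperp d).mpr hnc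
    exact hfree w hw hw0 d hd hdn hfix
  · intro hcop w hw hw0 j hj hjn hfix
    have hfix_gcd : IsPeriodicPt cshift (j.gcd n) w :=
      IsPeriodicPt.gcd hfix (isPeriodicPt_cshift_length hn w)
    exact (exists_isPeriodicPt_cshift_codeword_iff hn hgperp _).mp ⟨w, hw, hw0, hfix_gcd⟩
      (hcop _ (Nat.gcd_dvd_right j n) (Nat.gcd_pos_of_pos_left n hj)
        ((Nat.gcd_le_left n hj).trans_lt hjn))

/-- for a cyclic code C ⊆ F_q^n with generator g (a monic divisor of
x^n - 1) and parity check polynomial gperp = (x^n - 1)/g, the action of the cyclic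
group of order n on C ∖ {0} is free if and only if gcd(gperp, x^d - 1) = 1 for
every proper divisor d of n. -/
theorem stmt11 {F : Type*} [Field F] [Fintype F] {n : ℕ} (hn : 1 ≤ n)
    (g : Polynomial F) (hmonic : g.Monic) (hdvd : g ∣ Polynomial.X ^ n - 1)
    (gperp : Polynomial F) (hgperp : g * gperp = Polynomial.X ^ n - 1) :
    (∀ w : Fin n → F, g ∣ wordPoly w → w ≠ 0 →
        ∀ j : ℕ, 0 < j → j < n → cshift^[j] w ≠ w) ↔
      (∀ d : ℕ, d ∣ n → 1 ≤ d → d < n →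
        IsCoprime gperp (Polynomial.X ^ d - 1)) :=
  stmt11_general hn g gperp hgperp
end

section
/- Let 𝔽_q be a finite field with q elements, k ≥ 1, n = q^k − 1, and let g⊥(x) ∈ 𝔽_q[x] be a monic irreducible polynomial of degree k dividing x^n − 1. Let w = (w_1,…,w_n) ∈ 𝔽_q^n be the word with g(x) := (x^n−1)/g⊥(x) = Σ_{j=1}^{n} w_j x^{j−1}. Then g⊥ is primitive (the image of x in 𝔽_q[x]/(g⊥(x)) has multiplicative order n) if and only if every nonzero vector v = (v_1,…,v_k) ∈ 𝔽_q^k occurs exactly once as a cyclic consecutive subsequence of w, i.e., for each nonzero v ∈ 𝔽_q^k there is exactly one i ∈ {0,1,…,n−1} such that w_{i+j} = v_j for all j = 1,…,k, where subscripts of w are taken modulo n (with representatives in {1,…,n}). -/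
open Polynomial Finset

theorem Polynomial.coeff_mul_eq_sum_range_of_natDegree_le {R : Type*} [CommSemiring R]
    {p q : R[X]} {k m : ℕ} (hq : q.natDegree ≤ k) (hm : k ≤ m) :
    (p * q).coeff m = ∑ b ∈ range (k + 1), q.coeff b * p.coeff (m - b) := by
  rw [mul_comm, coeff_mul,
    Nat.sum_antidiagonal_eq_sum_range_succ fun b a => q.coeff b * p.coeff a]
  refine (sum_subset (range_subset_range.2 (by omega)) fun b _ hb => ?_).symm
  rw [coeff_eq_zero_of_natDegree_lt (by simp only [mem_range] at hb; omega), zero_mul]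

theorem Polynomial.sum_range_coeff_smul_pow_sub_eq_zero {R A : Type*} [CommSemiring R]
    [CommSemiring A] [Algebra R A] {p : R[X]} {x y : A} (hxy : x * y = 1) (hp : aeval x p = 0)
    {k m : ℕ} (hk : p.natDegree ≤ k) (hm : k ≤ m) :
    ∑ b ∈ range (k + 1), p.coeff b • y ^ (m - b) = 0 := by
  have hpow : ∀ b ≤ m, x ^ b * y ^ m = y ^ (m - b) := fun b hb => by
    obtain ⟨c, rfl⟩ := Nat.exists_eq_add_of_le hb
    rw [pow_add, ← mul_assoc, ← mul_pow, hxy, one_pow, one_mul, Nat.add_sub_cancel_left]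
  calc ∑ b ∈ range (k + 1), p.coeff b • y ^ (m - b)
      = (∑ b ∈ range (k + 1), p.coeff b • x ^ b) * y ^ m := by
        rw [sum_mul]
        refine sum_congr rfl fun b hb => ?_
        rw [smul_mul_assoc, hpow b (by simp only [mem_range] at hb; omega)]
    _ = 0 := by rw [← aeval_eq_sum_range' (by omega), hp, zero_mul]

theorem eq_zero_of_sum_range_mul_sub_eq_zero {R : Type*} [Semiring R] [NoZeroDivisors R]
    {c d : ℕ → R} {k N : ℕ} (hc : c 0 ≠ 0)
    (hrec : ∀ m, k ≤ m → m < N → ∑ b ∈ range (k + 1), c b * d (m - b) = 0)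
    (hinit : ∀ m < k, d m = 0) : ∀ m < N, d m = 0 := by
  intro m
  induction m using Nat.strong_induction_on with
  | _ m ih =>
    intro hm
    rcases lt_or_ge m k with hmk | hmk
    · exact hinit m hmk
    · have h := hrec m hmk hm
      rw [sum_range_succ', sum_eq_zero fun b hb => by
        rw [ih _ (by simp only [mem_range] at hb; omega) (by omega), mul_zero], zero_add,
        Nat.sub_zero] at h
      exact (mul_eq_zero.1 h).resolve_left hc

namespace PowerBasis

variable {F K : Type*} [Field F] [Field K] [Algebra F K] (pb : PowerBasis F K)

theorem exists_linearMap_inv_gen_pow_eq (hgen : pb.gen ≠ 0) (c : ℕ → F) :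
    ∃ φ : K →ₗ[F] F, ∀ j < pb.dim, φ (pb.gen⁻¹ ^ j) = c j := by
  refine ⟨pb.basis.constr F (fun i => c (pb.dim - 1 - i)) ∘ₗ
    LinearMap.mulLeft F (pb.gen ^ (pb.dim - 1)), fun j hj => ?_⟩
  have hshift : pb.gen ^ (pb.dim - 1) * pb.gen⁻¹ ^ j = pb.basis ⟨pb.dim - 1 - j, by omega⟩ := by
    rw [basis_eq_pow, inv_pow, ← pow_sub₀ _ hgen (show j ≤ pb.dim - 1 by omega)]
  rw [LinearMap.comp_apply, LinearMap.mulLeft_apply, hshift, Module.Basis.constr_basis]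
  congr 1
  dsimp only
  omega

theorem eq_zero_of_forall_linearMap_inv_gen_pow_mul_eq_zero (hgen : pb.gen ≠ 0) {φ : K →ₗ[F] F}
    (hφ : φ ≠ 0) {z : K} (hz : ∀ j < pb.dim, φ (pb.gen⁻¹ ^ j * z) = 0) : z = 0 := by
  by_contra hz0
  set c := pb.gen⁻¹ ^ (pb.dim - 1) * z
  have hc : c ≠ 0 := mul_ne_zero (pow_ne_zero _ (inv_ne_zero hgen)) hz0
  have hvanish : φ ∘ₗ LinearMap.mulRight F c = 0 := pb.basis.ext fun i => by
    have hi : (i : ℕ) ≤ pb.dim - 1 := Nat.le_sub_one_of_lt i.isLt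
    have hshift : pb.gen ^ (i : ℕ) * pb.gen⁻¹ ^ (pb.dim - 1) = pb.gen⁻¹ ^ (pb.dim - 1 - i) := by
      rw [inv_pow_sub₀ hgen hi, inv_pow, mul_comm]
    rw [LinearMap.comp_apply, LinearMap.zero_apply, LinearMap.mulRight_apply, basis_eq_pow,
      ← mul_assoc, hshift, hz _ (by omega)]
  refine hφ (LinearMap.ext fun y => ?_)
  have := LinearMap.congr_fun hvanish (y * c⁻¹)
  rwa [LinearMap.comp_apply, LinearMap.mulRight_apply, inv_mul_cancel_right₀ hc] at this

theorem bijective_linearMap_inv_gen_pow_mul (hgen : pb.gen ≠ 0) {φ : K →ₗ[F] F} (hφ : φ ≠ 0) :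
    Function.Bijective fun z : K => fun j : Fin pb.dim => φ (pb.gen⁻¹ ^ (j : ℕ) * z) := by
  let Ψ : K →ₗ[F] Fin pb.dim → F :=
    LinearMap.pi fun j => φ ∘ₗ LinearMap.mulLeft F (pb.gen⁻¹ ^ (j : ℕ))
  have hinj : Function.Injective Ψ := by
    rw [← LinearMap.ker_eq_bot, LinearMap.ker_eq_bot']
    exact fun z hz => pb.eq_zero_of_forall_linearMap_inv_gen_pow_mul_eq_zero hgen hφ
      fun j hj => congr_fun hz ⟨j, hj⟩
  have := pb.finite
  exact ⟨hinj, (LinearMap.injective_iff_surjective_of_finrank_eq_finrank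
    (by rw [pb.finrank, Module.finrank_fin_fun])).1 hinj⟩

end PowerBasis

theorem orderOf_eq_iff_forall_existsUnique_pow {G : Type*} [Group G] [Finite G] {n : ℕ}
    (hn : Nat.card G = n) (x : G) : orderOf x = n ↔ ∀ y : G, ∃! i : Fin n, x ^ (i : ℕ) = y := by
  rw [← Function.bijective_iff_existsUnique]
  constructor
  · intro hx
    refine Function.Injective.bijective_of_nat_card_le (fun i j hij => Fin.ext ?_) (by simp [hn])
    exact pow_injOn_Iio_orderOf (by simp [hx]) (by simp [hx]) hij
  · intro hbij
    have hpos : 0 < orderOf x := orderOf_pos x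
    refine (Nat.le_of_dvd (hn ▸ Nat.card_pos) (hn ▸ orderOf_dvd_natCard x)).antisymm
      (not_lt.1 fun hlt => ?_)
    have := hbij.1 (a₁ := ⟨orderOf x, hlt⟩) (a₂ := ⟨0, hpos.trans hlt⟩)
      (by simp [pow_orderOf_eq_one])
    simp only [Fin.mk.injEq] at this
    omega

theorem Function.Bijective.forall_ne_zero_existsUnique_iff {K V ι : Type*} [GroupWithZero K]
    [Zero V] {f : K → V} (hf : Function.Bijective f) (hf0 : f 0 = 0) (u : ι → Kˣ) :
    (∀ v, v ≠ 0 → ∃! i, f (u i) = v) ↔ ∀ a : Kˣ, ∃! i, u i = a := by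
  constructor
  · intro H a
    simpa only [hf.1.eq_iff, Units.val_inj] using
      H (f a) (by rw [← hf0, hf.1.ne_iff]; exact a.ne_zero)
  · intro H v hv
    obtain ⟨z, rfl⟩ := hf.2 v
    have hz : z ≠ 0 := by rintro rfl; exact hv hf0
    simpa only [hf.1.eq_iff, ← Units.val_inj, Units.val_mk0] using H (Units.mk0 z hz)

section CheckPolynomial

variable {F : Type*} [Field F] {g h : F[X]} {n : ℕ}

theorem Polynomial.coeff_zero_mul_coeff_zero_eq_neg_one (hg : g * h = X ^ n - 1) (hn : 0 < n) :
    g.coeff 0 * h.coeff 0 = -1 := by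
  rw [← mul_coeff_zero, hg]
  simp [hn.ne]

theorem AdjoinRoot.root_pow_eq_one_of_mul_eq (hg : g * h = X ^ n - 1) :
    AdjoinRoot.root h ^ n = 1 := by
  have := AdjoinRoot.mk_eq_zero.2 (Dvd.intro_left g hg)
  rwa [map_sub, map_pow, AdjoinRoot.mk_X, map_one, sub_eq_zero] at this

theorem exists_linearMap_coeff_mod_eq_inv_root_pow [Fact (Irreducible h)]
    (hg : g * h = X ^ n - 1) (hn : 0 < n) :
    ∃ φ : AdjoinRoot h →ₗ[F] F, φ ≠ 0 ∧ ∀ m, g.coeff (m % n) = φ ((AdjoinRoot.root h)⁻¹ ^ m) := by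
  have hirr : Irreducible h := Fact.out
  set α := AdjoinRoot.root h
  have hαn : α ^ n = 1 := AdjoinRoot.root_pow_eq_one_of_mul_eq hg
  have hα : α ≠ 0 := (Units.ofPowEqOne _ _ hαn hn.ne').ne_zero
  have hconst : g.coeff 0 * h.coeff 0 ≠ 0 := by
    rw [coeff_zero_mul_coeff_zero_eq_neg_one hg hn]
    exact neg_ne_zero.2 one_ne_zero
  obtain ⟨φ, hφ⟩ :=
    (AdjoinRoot.powerBasis hirr.ne_zero).exists_linearMap_inv_gen_pow_eq hα g.coeff
  have hlt : ∀ m < n, g.coeff m - φ (α⁻¹ ^ m) = 0 := by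
    refine eq_zero_of_sum_range_mul_sub_eq_zero (k := h.natDegree) (right_ne_zero_of_mul hconst)
      (fun m hkm hmn => ?_) fun m hm => sub_eq_zero.2 (hφ m hm).symm
    have hcoeff : (g * h).coeff m = 0 := by
      have := hirr.natDegree_pos
      rw [hg, coeff_sub, coeff_X_pow, coeff_one, if_neg (by omega), if_neg (by omega), sub_zero]
    have hroot : ∑ b ∈ range (h.natDegree + 1), h.coeff b • α⁻¹ ^ (m - b) = 0 :=
      sum_range_coeff_smul_pow_sub_eq_zero (mul_inv_cancel₀ hα)
        (AdjoinRoot.eval₂_root h) le_rfl hkm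
    simp_rw [mul_sub, sum_sub_distrib, ← coeff_mul_eq_sum_range_of_natDegree_le le_rfl hkm,
      hcoeff]
    rw [zero_sub, neg_eq_zero, ← map_zero φ, ← hroot, map_sum]
    simp only [map_smul, smul_eq_mul]
  have hmod : ∀ m, g.coeff (m % n) = φ (α⁻¹ ^ m) := fun m => by
    rw [pow_eq_pow_mod m (by rw [inv_pow, hαn, inv_one]), ← sub_eq_zero]
    exact hlt _ (Nat.mod_lt _ hn)
  refine ⟨φ, fun hφ0 => left_ne_zero_of_mul hconst ?_, hmod⟩
  rw [← Nat.zero_mod n, hmod, hφ0, LinearMap.zero_apply]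

end CheckPolynomial

theorem stmt14_general {F : Type*} [Field F] [Fintype F] (k : ℕ)
    (n : ℕ) (hn : n = Fintype.card F ^ k - 1)
    (gperp : Polynomial F) (hirr : Irreducible gperp)
    (hdeg : gperp.natDegree = k)
    (g : Polynomial F) (hg : g * gperp = Polynomial.X ^ n - 1)
    (w : Fin n → F) (hw : ∀ i : Fin n, w i = g.coeff (i : ℕ)) :
    orderOf (AdjoinRoot.root gperp) = n ↔
      ∀ v : Fin k → F, v ≠ 0 →
        ∃! i : Fin n, ∀ j : Fin k,
          w ⟨((i : ℕ) + (j : ℕ)) % n, Nat.mod_lt _ i.pos⟩ = v j := by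
  have : Fact (Irreducible gperp) := ⟨hirr⟩
  subst hdeg
  set pb := AdjoinRoot.powerBasis hirr.ne_zero
  have := pb.finite
  have : Finite (AdjoinRoot gperp) := Module.finite_of_finite F
  have hcard : Nat.card (AdjoinRoot gperp)ˣ = n := by
    rw [Nat.card_units, Module.natCard_eq_pow_finrank (K := F), pb.finrank,
      Nat.card_eq_fintype_card, hn]
    rfl
  have hn0 : 0 < n := hcard ▸ Nat.card_pos
  obtain ⟨φ, hφ0, hφ⟩ := exists_linearMap_coeff_mod_eq_inv_root_pow hg hn0
  have hα : AdjoinRoot.root gperp ≠ 0 :=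
    (Units.ofPowEqOne _ _ (AdjoinRoot.root_pow_eq_one_of_mul_eq hg) hn0.ne').ne_zero
  set u := Units.mk0 _ hα
  have hwindow : ∀ (i : Fin n) (j : Fin gperp.natDegree),
      w ⟨((i : ℕ) + (j : ℕ)) % n, Nat.mod_lt _ i.pos⟩ =
        φ (pb.gen⁻¹ ^ (j : ℕ) * ↑(u⁻¹ ^ (i : ℕ))) := by
    intro i j
    rw [hw, hφ]
    simp [u, pb, pow_add, mul_comm]
  calc orderOf (AdjoinRoot.root gperp) = n ↔ orderOf u⁻¹ = n := by
        rw [orderOf_inv, ← orderOf_units, Units.val_mk0]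
    _ ↔ ∀ a, ∃! i : Fin n, u⁻¹ ^ (i : ℕ) = a := orderOf_eq_iff_forall_existsUnique_pow hcard _
    _ ↔ _ := ((pb.bijective_linearMap_inv_gen_pow_mul hα hφ0).forall_ne_zero_existsUnique_iff
        (by ext; simp) _).symm
    _ ↔ _ := by simp only [funext_iff, hwindow]; exact Iff.rfl

/-- with gperp monic irreducible of degree k dividing x^n - 1
(n = q^k - 1), g = (x^n - 1)/gperp, and w ∈ F_q^n the word with
g = Σ_{j=1}^n w_j x^{j-1} (i.e. w_i = coeff of x^{i} in g, 0-indexed), gperp is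
primitive if and only if every nonzero vector v ∈ F_q^k occurs exactly once as a
cyclic consecutive subsequence of w. -/
theorem stmt14 {F : Type*} [Field F] [Fintype F] (k : ℕ) (hk : 1 ≤ k)
    (n : ℕ) (hn : n = Fintype.card F ^ k - 1)
    (gperp : Polynomial F) (hmonic : gperp.Monic) (hirr : Irreducible gperp)
    (hdeg : gperp.natDegree = k) (hdvd : gperp ∣ Polynomial.X ^ n - 1)
    (g : Polynomial F) (hg : g * gperp = Polynomial.X ^ n - 1)
    (w : Fin n → F) (hw : ∀ i : Fin n, w i = g.coeff (i : ℕ)) :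
    orderOf (AdjoinRoot.root gperp) = n ↔
      ∀ v : Fin k → F, v ≠ 0 →
        ∃! i : Fin n, ∀ j : Fin k,
          w ⟨((i : ℕ) + (j : ℕ)) % n, Nat.mod_lt _ i.pos⟩ = v j :=
  stmt14_general k n hn gperp hirr hdeg g hg w hw
end
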